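/- arXiv:2104.08187 — 9 statements merged into one kernel-verified Lean document; each statement's English description precedes it below -/
import Mathlib

section
/- Let p be an odd prime, let ζ := exp(2πi/p) ∈ ℂ, and for q ∈ {1, …, p−1} define the signature defect sum S(q) := Σ_{k=1}^{p−1} (1+ζ^k)(1+ζ^{kq}) / ((1−ζ^k)(1−ζ^{kq})). Then every summand (1+ζ^k)(1+ζ^{kq}) / ((1−ζ^k)(1−ζ^{kq})) is a real number, and S(q) ≤ S(p−1) for all q ∈ {1, …, p−1}, with equality if and only if q = p−1. -/
open scoped BigOperators

/-- The primitive `p`-th root of unity `exp(2πi/p)`. -/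
noncomputable def zetaP (p : ℕ) : ℂ := Complex.exp (2 * Real.pi * Complex.I / p)

/-- The signature defect sum `S(q)`. -/
noncomputable def defectSum (p q : ℕ) : ℂ :=
  ∑ k ∈ Finset.Icc 1 (p - 1),
    ((1 + zetaP p ^ k) * (1 + zetaP p ^ (k * q))) /
      ((1 - zetaP p ^ k) * (1 - zetaP p ^ (k * q)))

namespace DefectAux

/-- The Möbius transform `(1+z)/(1-z)`. -/
noncomputable def gm (z : ℂ) : ℂ := (1 + z) / (1 - z)

lemma gm_inv {z : ℂ} (hz0 : z ≠ 0) (hz1 : z ≠ 1) : gm z⁻¹ = -gm z := by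
  have h1 : (1 : ℂ) - z ≠ 0 := sub_ne_zero.mpr fun h => hz1 h.symm
  have h2 : (1 : ℂ) - z⁻¹ ≠ 0 :=
    sub_ne_zero.mpr fun h => hz1 (by rwa [eq_comm, inv_eq_one] at h)
  unfold gm
  rw [← neg_div, div_eq_div_iff h2 h1]
  field_simp
  ring

lemma gm_inj {z w : ℂ} (hz : z ≠ 1) (hw : w ≠ 1) (h : gm z = gm w) : z = w := by
  have h1 : (1 : ℂ) - z ≠ 0 := sub_ne_zero.mpr fun h => hz h.symm
  have h2 : (1 : ℂ) - w ≠ 0 := sub_ne_zero.mpr fun h => hw h.symm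
  unfold gm at h
  rw [div_eq_div_iff h1 h2] at h
  linear_combination h / 2

lemma gm_pure_im {z : ℂ} (hz0 : z ≠ 0) (hz1 : z ≠ 1)
    (hc : (starRingEnd ℂ) z = z⁻¹) :
    gm z = ((gm z).im : ℂ) * Complex.I := by
  have h1 : (1 : ℂ) - z ≠ 0 := sub_ne_zero.mpr fun h => hz1 h.symm
  have hconj : (starRingEnd ℂ) (gm z) = -gm z := by
    have : (starRingEnd ℂ) (gm z) = gm z⁻¹ := by
      unfold gm
      rw [map_div₀, map_add, map_sub, map_one, hc]
    rw [this, gm_inv hz0 hz1]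
  have hre : (gm z).re = 0 := by
    have h := congrArg Complex.re hconj
    simp only [Complex.conj_re, Complex.neg_re] at h
    linarith
  apply Complex.ext <;> simp [hre]

end DefectAux

/-- Every summand of `S(q)` is real, `S(q) ≤ S(p-1)` for all `q ∈ {1,…,p−1}`, with equality
iff `q = p − 1`. -/
theorem defectSum_summand_real_and_max_iff (p : ℕ) (hp : p.Prime) (hodd : Odd p) :
    (∀ q ∈ Finset.Icc 1 (p - 1), ∀ k ∈ Finset.Icc 1 (p - 1),
      (((1 + zetaP p ^ k) * (1 + zetaP p ^ (k * q))) /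
        ((1 - zetaP p ^ k) * (1 - zetaP p ^ (k * q)))).im = 0) ∧
    (∀ q ∈ Finset.Icc 1 (p - 1),
      (defectSum p q).re ≤ (defectSum p (p - 1)).re ∧
      (defectSum p q = defectSum p (p - 1) ↔ q = p - 1)) := by
  have hp2 : 2 ≤ p := hp.two_le
  have hppos : 0 < p := hp.pos
  have hprim : IsPrimitiveRoot (zetaP p) p := Complex.isPrimitiveRoot_exp p hp.ne_zero
  have hζp : zetaP p ^ p = 1 := hprim.pow_eq_one
  have hζ0 : zetaP p ≠ 0 := hprim.ne_zero hp.ne_zero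
  have hζkne0 : ∀ k : ℕ, zetaP p ^ k ≠ 0 := fun k => pow_ne_zero k hζ0
  have hconjζ : (starRingEnd ℂ) (zetaP p) = (zetaP p)⁻¹ := by
    unfold zetaP
    rw [← Complex.exp_conj, ← Complex.exp_neg]
    congr 1
    simp only [map_div₀, map_mul, Complex.conj_I, map_ofNat, Complex.conj_ofReal,
      map_natCast]
    ring
  have hconjpow : ∀ k : ℕ, (starRingEnd ℂ) (zetaP p ^ k) = (zetaP p ^ k)⁻¹ := fun k => by
    rw [map_pow, hconjζ, inv_pow]
  have hne1 : ∀ k : ℕ, ¬ p ∣ k → zetaP p ^ k ≠ 1 := fun k hk h =>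
    hk ((hprim.pow_eq_one_iff_dvd k).mp h)
  set t : ℕ → ℝ := fun k => (DefectAux.gm (zetaP p ^ k)).im with ht
  have hgm : ∀ k : ℕ, ¬ p ∣ k →
      DefectAux.gm (zetaP p ^ k) = (t k : ℂ) * Complex.I := fun k hk =>
    DefectAux.gm_pure_im (hζkne0 k) (hne1 k hk) (hconjpow k)
  have hpowmod : ∀ n : ℕ, zetaP p ^ n = zetaP p ^ (n % p) := fun n => by
    conv_lhs => rw [← Nat.div_add_mod n p]
    rw [pow_add, pow_mul, hζp, one_pow, one_mul]
  have hmodnd : ∀ n : ℕ, ¬ p ∣ n → ¬ p ∣ (n % p) := by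
    intro n hn hd
    rw [Nat.dvd_iff_mod_eq_zero] at hn hd
    rw [Nat.mod_mod_of_dvd _ dvd_rfl] at hd
    exact hn hd
  -- the general summand formula
  have hsummand : ∀ q k : ℕ, ¬ p ∣ q → ¬ p ∣ k →
      ((1 + zetaP p ^ k) * (1 + zetaP p ^ (k * q))) /
        ((1 - zetaP p ^ k) * (1 - zetaP p ^ (k * q)))
        = ((-(t k * t ((k * q) % p)) : ℝ) : ℂ) := by
    intro q k hq hk
    have hkq : ¬ p ∣ k * q := fun h => ((Nat.Prime.dvd_mul hp).mp h).elim hk hq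
    have hm : ¬ p ∣ (k * q) % p := hmodnd _ hkq
    rw [← div_mul_div_comm]
    show DefectAux.gm (zetaP p ^ k) * DefectAux.gm (zetaP p ^ (k * q)) = _
    rw [hpowmod (k * q), hgm k hk, hgm _ hm,
      mul_mul_mul_comm, Complex.I_mul_I]
    push_cast
    ring
  -- `ζ^(k(p-1))` is the inverse of `ζ^k`
  have hinvpow : ∀ k : ℕ, zetaP p ^ (k * (p - 1)) = (zetaP p ^ k)⁻¹ := by
    intro k
    have hmul : zetaP p ^ (k * (p - 1)) * zetaP p ^ k = 1 := by
      rw [← pow_add]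
      have he : k * (p - 1) + k = p * k := by
        have : p - 1 + 1 = p := Nat.succ_pred_eq_of_pos hppos
        calc k * (p - 1) + k = k * ((p - 1) + 1) := by ring
          _ = p * k := by rw [this]; ring
      rw [he, pow_mul, hζp, one_pow]
    exact eq_inv_of_mul_eq_one_left hmul
  -- the summand formula for q = p-1
  have hsummand' : ∀ k : ℕ, ¬ p ∣ k →
      ((1 + zetaP p ^ k) * (1 + zetaP p ^ (k * (p - 1)))) /
        ((1 - zetaP p ^ k) * (1 - zetaP p ^ (k * (p - 1))))
        = ((t k ^ 2 : ℝ) : ℂ) := by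
    intro k hk
    rw [← div_mul_div_comm]
    show DefectAux.gm (zetaP p ^ k) * DefectAux.gm (zetaP p ^ (k * (p - 1))) = _
    rw [hinvpow k, DefectAux.gm_inv (hζkne0 k) (hne1 k hk), hgm k hk,
      mul_neg, mul_mul_mul_comm, Complex.I_mul_I]
    push_cast
    ring
  have hmem : ∀ k ∈ Finset.Icc 1 (p - 1), ¬ p ∣ k := by
    intro k hk hdvd
    rw [Finset.mem_Icc] at hk
    have := Nat.le_of_dvd (by omega) hdvd
    omega
  -- value of S(p-1)
  have hSmax : defectSum p (p - 1) = ((∑ k ∈ Finset.Icc 1 (p - 1), t k ^ 2 : ℝ) : ℂ) := by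
    unfold defectSum
    push_cast
    exact Finset.sum_congr rfl fun k hk => by
      rw [hsummand' k (hmem k hk)]; push_cast; ring
  refine ⟨?_, ?_⟩
  · intro q hq k hk
    rw [hsummand q k (hmem q hq) (hmem k hk)]
    simp
  intro q hq
  have hqd : ¬ p ∣ q := hmem q hq
  rw [Finset.mem_Icc] at hq
  have hqlt : q < p := by omega
  -- value of S(q)
  have hSq : defectSum p q
      = ((-(∑ k ∈ Finset.Icc 1 (p - 1), t k * t ((k * q) % p)) : ℝ) : ℂ) := by
    unfold defectSum
    push_cast
    rw [← Finset.sum_neg_distrib]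
    exact Finset.sum_congr rfl fun k hk => by
      rw [hsummand q k hqd (hmem k hk)]; push_cast; ring
  -- the map k ↦ k*q % p permutes Icc 1 (p-1)
  have hinj : Set.InjOn (fun k => (k * q) % p) (Finset.Icc 1 (p - 1) : Set ℕ) := by
    intro a ha b hb hab
    simp only [Finset.coe_Icc, Set.mem_Icc] at ha hb
    have hcop : Nat.gcd p q = 1 := (hp.coprime_iff_not_dvd.mpr hqd)
    have h1 : a * q ≡ b * q [MOD p] := hab
    have h2 : a ≡ b [MOD p] := h1.cancel_right_of_coprime hcop
    have ha' : a % p = a := Nat.mod_eq_of_lt (by omega)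
    have hb' : b % p = b := Nat.mod_eq_of_lt (by omega)
    unfold Nat.ModEq at h2
    omega
  have himg : (Finset.Icc 1 (p - 1)).image (fun k => (k * q) % p)
      = Finset.Icc 1 (p - 1) := by
    apply Finset.eq_of_subset_of_card_le
    · intro m hm
      simp only [Finset.mem_image] at hm
      obtain ⟨k, hk, rfl⟩ := hm
      have hkd := hmem k hk
      have hkq : ¬ p ∣ k * q := fun h => ((Nat.Prime.dvd_mul hp).mp h).elim hkd hqd
      have hmlt : (k * q) % p < p := Nat.mod_lt _ hppos
      have hmne : (k * q) % p ≠ 0 := fun h =>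
        hkq (Nat.dvd_iff_mod_eq_zero.mpr h)
      rw [Finset.mem_Icc]
      omega
    · rw [Finset.card_image_of_injOn hinj]
  have hperm : ∀ f : ℕ → ℝ,
      ∑ k ∈ Finset.Icc 1 (p - 1), f ((k * q) % p) = ∑ k ∈ Finset.Icc 1 (p - 1), f k := by
    intro f
    conv_rhs => rw [← himg]
    rw [Finset.sum_image (fun a ha b hb h => hinj ha hb h)]
  set S1 : ℝ := ∑ k ∈ Finset.Icc 1 (p - 1), t k ^ 2 with hS1
  set Sq : ℝ := ∑ k ∈ Finset.Icc 1 (p - 1), t k * t ((k * q) % p) with hSqdef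
  have hsqsum : ∑ k ∈ Finset.Icc 1 (p - 1), (t k + t ((k * q) % p)) ^ 2
      = 2 * S1 + 2 * Sq := by
    have h1 : ∑ k ∈ Finset.Icc 1 (p - 1), t ((k * q) % p) ^ 2 = S1 :=
      hperm (fun k => t k ^ 2)
    calc ∑ k ∈ Finset.Icc 1 (p - 1), (t k + t ((k * q) % p)) ^ 2
        = ∑ k ∈ Finset.Icc 1 (p - 1),
            (t k ^ 2 + t ((k * q) % p) ^ 2 + 2 * (t k * t ((k * q) % p))) := by
          exact Finset.sum_congr rfl fun k _ => by ring
      _ = S1 + S1 + 2 * Sq := by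
          rw [Finset.sum_add_distrib, Finset.sum_add_distrib, h1, ← Finset.mul_sum]
      _ = 2 * S1 + 2 * Sq := by ring
  have hnonneg : 0 ≤ 2 * S1 + 2 * Sq := by
    rw [← hsqsum]
    exact Finset.sum_nonneg fun k _ => sq_nonneg _
  have hre_q : (defectSum p q).re = -Sq := by rw [hSq]; simp
  have hre_max : (defectSum p (p - 1)).re = S1 := by rw [hSmax]; simp
  refine ⟨by rw [hre_q, hre_max]; linarith, ?_, ?_⟩
  · -- forward direction of the iff
    intro h
    have heq : -Sq = S1 := by
      have := congrArg Complex.re h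
      rwa [hre_q, hre_max] at this
    have hzero : ∑ k ∈ Finset.Icc 1 (p - 1), (t k + t ((k * q) % p)) ^ 2 = 0 := by
      rw [hsqsum]; linarith
    have hall := (Finset.sum_eq_zero_iff_of_nonneg
      (fun k _ => sq_nonneg (t k + t ((k * q) % p)))).mp hzero
    have h1mem : 1 ∈ Finset.Icc 1 (p - 1) := by rw [Finset.mem_Icc]; omega
    have h1 := hall 1 h1mem
    have h1' : t 1 + t ((1 * q) % p) = 0 := by
      have := sq_eq_zero_iff.mp h1
      exact this
    rw [one_mul, Nat.mod_eq_of_lt hqlt] at h1'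
    -- so t q = - t 1, hence gm(ζ^q) = gm(ζ^(p-1))
    have hp1d : ¬ p ∣ (p - 1) := by
      intro h
      have := Nat.le_of_dvd (by omega) h
      omega
    have hgmq : DefectAux.gm (zetaP p ^ q) = DefectAux.gm (zetaP p ^ (p - 1)) := by
      have e1 : zetaP p ^ (p - 1) = (zetaP p ^ 1)⁻¹ := by
        have := hinvpow 1
        rwa [one_mul] at this
      rw [hgm q hqd, e1, DefectAux.gm_inv (hζkne0 1) (hne1 1 (by
        intro h; have := Nat.le_of_dvd one_pos h; omega)), hgm 1 (by
        intro h; have := Nat.le_of_dvd one_pos h; omega)]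
      have : t q = -(t 1) := by linarith
      rw [this]
      push_cast
      ring
    have hpow : zetaP p ^ q = zetaP p ^ (p - 1) :=
      DefectAux.gm_inj (hne1 q hqd) (hne1 (p - 1) hp1d) hgmq
    exact hprim.pow_inj hqlt (by omega) hpow
  · intro h
    rw [h]
end

section
/- For every prime p, with ζ := exp(2πi/p) ∈ ℂ, one has Σ_{k=1}^{p−1} (1+ζ^k)(1+ζ^{−k}) / ((1−ζ^k)(1−ζ^{−k})) = (p−1)(p−2)/3. -/
/-!
For an `n`-th root of unity `w ≠ 1`, telescoping gives `(∑_{j<n} j w^j) (w - 1) = n`, so with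
`A(w) := ∑_{j<n} j w^j` each summand equals `4 A(w) A(w⁻¹) / n² - 1`. Orthogonality of the
characters `k ↦ ζ^{jk}` (Parseval) gives `∑_{k<n} A(ζ^k) A(ζ^{-k}) = n ∑_{j<n} j²`; the term
`k = 0` is `(∑_{j<n} j)²`, so the `k ≠ 0` terms add up to `n²(n² - 1)/12` and the defect sum to
`(n² - 1)/3 - (n - 1)`.
-/

open scoped BigOperators

open Finset

section CommRing

variable {R : Type*} [CommRing R]

theorem sum_range_cast_mul_two (n : ℕ) : (∑ j ∈ range n, (j : R)) * 2 = n * (n - 1) := by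
  induction n with
  | zero => simp
  | succ n ih => rw [sum_range_succ, add_mul, ih]; push_cast; ring

theorem sum_range_cast_sq_mul_six (n : ℕ) :
    (∑ j ∈ range n, (j : R) ^ 2) * 6 = n * (n - 1) * (2 * n - 1) := by
  induction n with
  | zero => simp
  | succ n ih => rw [sum_range_succ, add_mul, ih]; push_cast; ring

theorem sum_range_cast_mul_pow_mul_sub_one (z : R) (n : ℕ) :
    (∑ j ∈ range n, (j : R) * z ^ j) * (z - 1) = (n - 1) * z ^ n - ∑ j ∈ range n, z ^ j + 1 := by
  induction n with
  | zero => simp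
  | succ n ih =>
    rw [sum_range_succ, sum_range_succ (fun j => z ^ j), add_mul, ih]
    push_cast
    ring

end CommRing

theorem sum_range_succ_eq_add_sum_Icc {M : Type*} [AddCommMonoid M] (f : ℕ → M) (m : ℕ) :
    ∑ k ∈ range (m + 1), f k = f 0 + ∑ k ∈ Icc 1 m, f k := by
  rw [range_eq_Ico, sum_eq_sum_Ico_succ_bot m.succ_pos, zero_add, Nat.succ_eq_add_one,
    Ico_add_one_right_eq_Icc]

section Field

variable {K : Type*} [Field K]

theorem geom_sum_eq_zero_of_pow_eq_one {w : K} {n : ℕ} (hw : w ≠ 1) (hwn : w ^ n = 1) :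
    ∑ k ∈ range n, w ^ k = 0 := by
  rw [geom_sum_eq hw, hwn, sub_self, zero_div]

theorem sum_range_cast_mul_pow_mul_sub_one_of_pow_eq_one {w : K} {n : ℕ} (hw : w ≠ 1)
    (hwn : w ^ n = 1) : (∑ j ∈ range n, (j : K) * w ^ j) * (w - 1) = n := by
  rw [sum_range_cast_mul_pow_mul_sub_one, hwn, geom_sum_eq_zero_of_pow_eq_one hw hwn]
  ring

theorem defect_summand_eq_of_pow_eq_one {w : K} {n : ℕ} (hw : w ≠ 1) (hwn : w ^ n = 1)
    (hn : (n : K) ≠ 0) :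
    (1 + w) * (1 + w⁻¹) / ((1 - w) * (1 - w⁻¹)) =
      4 * ((∑ j ∈ range n, (j : K) * w ^ j) * ∑ j ∈ range n, (j : K) * w⁻¹ ^ j) / n ^ 2 - 1 := by
  have hA := sum_range_cast_mul_pow_mul_sub_one_of_pow_eq_one hw hwn
  have hB := sum_range_cast_mul_pow_mul_sub_one_of_pow_eq_one (inv_ne_one.mpr hw)
    (by rw [inv_pow, hwn, inv_one])
  generalize ∑ j ∈ range n, (j : K) * w ^ j = A at hA ⊢
  generalize ∑ j ∈ range n, (j : K) * w⁻¹ ^ j = B at hB ⊢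
  have hw0 : w ≠ 0 := by rintro rfl; rcases n with _ | n <;> simp_all
  have hn2 : (n : K) ^ 2 = A * B * ((1 - w) * (1 - w⁻¹)) := by
    rw [sq]; nth_rw 1 [← hA]; rw [← hB]; ring
  have hD : (1 - w) * (1 - w⁻¹) ≠ 0 := fun h => hn (by simpa [h] using hn2)
  have hAB : A * B ≠ 0 := fun h => hn (by simpa [h] using hn2)
  rw [hn2, eq_sub_iff_add_eq, div_add_one hD, mul_comm 4, mul_div_mul_left _ _ hAB]
  congr 1
  linear_combination 2 * mul_inv_cancel₀ hw0

theorem IsPrimitiveRoot.sum_range_mul_sum_range {ζ : K} {n : ℕ} (hζ : IsPrimitiveRoot ζ n)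
    (a b : ℕ → K) :
    ∑ k ∈ range n, (∑ j ∈ range n, a j * (ζ ^ k) ^ j) * (∑ l ∈ range n, b l * (ζ ^ k)⁻¹ ^ l) =
      n * ∑ j ∈ range n, a j * b j := by
  rcases n.eq_zero_or_pos with rfl | hn
  · simp
  have hζ0 : ζ ≠ 0 := hζ.ne_zero hn.ne'
  have orth : ∀ j ∈ range n, ∀ l ∈ range n,
      ∑ k ∈ range n, (ζ ^ j * (ζ ^ l)⁻¹) ^ k = if j = l then (n : K) else 0 := by
    intro j hj l hl
    split_ifs with hjl
    · simp [hjl, hζ0]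
    · apply geom_sum_eq_zero_of_pow_eq_one
      · rw [Ne, mul_inv_eq_one₀ (pow_ne_zero _ hζ0)]
        exact fun h => hjl (hζ.pow_inj (mem_range.1 hj) (mem_range.1 hl) h)
      · rw [mul_pow, inv_pow, ← pow_mul, ← pow_mul, pow_mul', pow_mul' ζ l, hζ.pow_eq_one]
        simp
  calc _ = ∑ j ∈ range n, ∑ l ∈ range n, a j * b l * ∑ k ∈ range n, (ζ ^ j * (ζ ^ l)⁻¹) ^ k := by
        simp_rw [sum_mul_sum, mul_sum]
        rw [sum_comm]
        refine sum_congr rfl fun j _ => ?_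
        rw [sum_comm]
        refine sum_congr rfl fun l _ => sum_congr rfl fun k _ => ?_
        ring
    _ = _ := by
        rw [mul_sum]
        refine sum_congr rfl fun j hj => ?_
        rw [sum_congr rfl (fun l hl => by rw [orth j hj l hl])]
        simp [hj, mul_comm]

end Field

theorem IsPrimitiveRoot.defectSum_inv_eq {K : Type*} [Field K] [CharZero K] {ζ : K} {n : ℕ}
    (hζ : IsPrimitiveRoot ζ n) (hn : 0 < n) :
    ∑ k ∈ Icc 1 (n - 1), ((1 + ζ ^ k) * (1 + ζ ^ (-(k : ℤ)))) /
        ((1 - ζ ^ k) * (1 - ζ ^ (-(k : ℤ)))) = ((n : K) - 1) * ((n : K) - 2) / 3 := by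
  obtain ⟨m, rfl⟩ : ∃ m, n = m + 1 := ⟨n - 1, by omega⟩
  set A : ℕ → K := fun k => ∑ j ∈ range (m + 1), (j : K) * (ζ ^ k) ^ j
  set B : ℕ → K := fun k => ∑ j ∈ range (m + 1), (j : K) * (ζ ^ k)⁻¹ ^ j
  have hn0 : ((m + 1 : ℕ) : K) ≠ 0 := Nat.cast_ne_zero.2 m.succ_ne_zero
  have hterm : ∀ k ∈ Icc 1 m, ((1 + ζ ^ k) * (1 + ζ ^ (-(k : ℤ)))) /
      ((1 - ζ ^ k) * (1 - ζ ^ (-(k : ℤ)))) = 4 * (A k * B k) / ((m + 1 : ℕ) : K) ^ 2 - 1 := by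
    intro k hk
    obtain ⟨hk1, hkm⟩ := mem_Icc.1 hk
    rw [zpow_neg, zpow_natCast]
    refine defect_summand_eq_of_pow_eq_one (hζ.pow_ne_one_of_pos_of_lt (by omega) (by omega)) ?_ hn0
    rw [← pow_mul, mul_comm, pow_mul, hζ.pow_eq_one, one_pow]
  have hAB : ∑ k ∈ Icc 1 m, A k * B k =
      (m + 1 : ℕ) * ∑ j ∈ range (m + 1), (j : K) ^ 2 - (∑ j ∈ range (m + 1), (j : K)) ^ 2 := by
    have h : ∑ k ∈ range (m + 1), A k * B k = (m + 1 : ℕ) * ∑ j ∈ range (m + 1), (j : K) * j :=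
      hζ.sum_range_mul_sum_range _ _
    have hA0 : A 0 = ∑ j ∈ range (m + 1), (j : K) := by simp [A]
    have hB0 : B 0 = ∑ j ∈ range (m + 1), (j : K) := by simp [B]
    simp only [sum_range_succ_eq_add_sum_Icc (fun k => A k * B k), hA0, hB0, ← sq] at h
    linear_combination h
  rw [add_tsub_cancel_right, sum_congr rfl hterm, sum_sub_distrib, ← sum_div, ← mul_sum, hAB,
    sum_const, Nat.card_Icc, add_tsub_cancel_right, nsmul_one,
    eq_div_of_mul_eq two_ne_zero (sum_range_cast_mul_two (R := K) (m + 1)),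
    eq_div_of_mul_eq (by norm_num) (sum_range_cast_sq_mul_six (R := K) (m + 1))]
  push_cast
  field_simp
  ring

/-- The signature defect sum for local characters `(χ, χ⁻¹)` equals `(p−1)(p−2)/3`. -/
theorem defectSum_inv_eq (p : ℕ) (hp : p.Prime) :
    ∑ k ∈ Finset.Icc 1 (p - 1),
        ((1 + zetaP p ^ k) * (1 + zetaP p ^ (-(k : ℤ)))) /
          ((1 - zetaP p ^ k) * (1 - zetaP p ^ (-(k : ℤ)))) =
      ((p : ℂ) - 1) * ((p : ℂ) - 2) / 3 :=
  (Complex.isPrimitiveRoot_exp p hp.ne_zero).defectSum_inv_eq hp.pos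
end

section
/- Let G be a cyclic group of prime order p with generator g, and let H be a module over the group ring ℤ[G] that is ℤ[G]-linearly isomorphic to (ℤ[G])^ν × ℤ^μ, where G acts trivially on ℤ^μ. Suppose H carries a G-invariant symmetric bilinear form B : H × H → ℤ (B(g·x, g·y) = B(x,y)) that is unimodular, i.e. the map H → Hom_ℤ(H, ℤ), x ↦ B(x, −), is bijective. Let H^G := {x ∈ H : g·x = x}. Then: (i) the kernel of the norm endomorphism N(x) := Σ_{i=0}^{p−1} g^i·x equals the orthogonal complement {x ∈ H : B(x, y) = 0 for all y ∈ H^G}; and (ii) the dual lattice (H^G)^∨ := {y ∈ H^G ⊗ ℚ : B_ℚ(y, x) ∈ ℤ for all x ∈ H^G} (where B_ℚ is the ℚ-bilinear extension of B) satisfies p·(H^G)^∨ ⊆ H^G, and the quotient group (H^G)^∨ / H^G is isomorphic to (ℤ/pℤ)^ν. -/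
open scoped BigOperators TensorProduct

section FixedLattice

variable {G : Type*} [Group G] {H : Type*} [AddCommGroup H] [DistribMulAction G H]

/-- The fixed submodule `H^G = {x : g • x = x}` (for a fixed group element `g`). -/
def fixedSubmodule (g : G) : Submodule ℤ H where
  carrier := {x | g • x = x}
  zero_mem' := smul_zero g
  add_mem' := by
    intro a b ha hb
    show g • (a + b) = a + b
    rw [smul_add, ha, hb]
  smul_mem' := by
    intro n x hx
    show g • (n • x) = n • x
    have h := map_zsmul (DistribMulAction.toAddMonoidHom H g) n x
    simp only [DistribMulAction.toAddMonoidHom_apply] at h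
    rw [h, hx]

variable (B : H →ₗ[ℤ] H →ₗ[ℤ] ℤ)

/-- For `x ∈ H^G`, the `ℤ`-linear functional on `H^G ⊗ ℚ` extending `z ↦ B(z, x)`;
this realizes the `ℚ`-bilinear extension `B_ℚ(·, x)` of `B` on `H^G ⊗ ℚ`. -/
noncomputable def pairQ (g : G) (x : fixedSubmodule (H := H) g) :
    ((fixedSubmodule (H := H) g) ⊗[ℤ] ℚ) →ₗ[ℤ] ℚ :=
  TensorProduct.lift
    { toFun := fun z => (B z.1 x.1) • (LinearMap.id : ℚ →ₗ[ℤ] ℚ)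
      map_add' := by
        intro z z'
        simp only [Submodule.coe_add, map_add, LinearMap.add_apply, add_smul]
      map_smul' := by
        intro n z
        simp only [Submodule.coe_smul, map_smul, LinearMap.smul_apply, RingHom.id_apply,
          smul_assoc] }

/-- The dual lattice `(H^G)^∨ = {y ∈ H^G ⊗ ℚ : B_ℚ(y, x) ∈ ℤ for all x ∈ H^G}`. -/
noncomputable def dualFixed (g : G) :
    AddSubgroup ((fixedSubmodule (H := H) g) ⊗[ℤ] ℚ) where
  carrier := {y | ∀ x : fixedSubmodule (H := H) g, ∃ m : ℤ, pairQ B g x y = m}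
  zero_mem' := by
    intro x
    exact ⟨0, by simp⟩
  add_mem' := by
    intro a b ha hb x
    obtain ⟨m₁, h₁⟩ := ha x
    obtain ⟨m₂, h₂⟩ := hb x
    exact ⟨m₁ + m₂, by rw [map_add, h₁, h₂]; push_cast; ring⟩
  neg_mem' := by
    intro a ha x
    obtain ⟨m, h⟩ := ha x
    exact ⟨-m, by rw [map_neg, h]; push_cast; ring⟩

/-- The canonical embedding `H^G → H^G ⊗ ℚ`, `x ↦ x ⊗ 1`. -/
noncomputable def latticeInQ (g : G) :
    (fixedSubmodule (H := H) g) →+ ((fixedSubmodule (H := H) g) ⊗[ℤ] ℚ) :=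
  AddMonoidHom.mk' (fun z => z ⊗ₜ[ℤ] (1 : ℚ)) (fun a b => TensorProduct.add_tmul a b 1)

end FixedLattice

/-!
Write `N = ∑_{i<p} gⁱ` and `L = H^G`. Invariance of `B` gives `B (N x) y = p * B x y` for
`y ∈ L`, and `N` maps `H` into `L`. So `N x = 0` forces `x ⊥ L`; conversely, if `x ⊥ L` then
`p * B (N x) z = B (N x) (N z) = p * B x (N z) = 0` for every `z`, so `N x = 0` by
unimodularity. As `N` is multiplication by `p` on `L`, the form is nondegenerate on `L`, and
`L ↪ L ⊗ ℚ`.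

Through `H ≅ ℤ[G]^ν × ℤ^μ`, `L` becomes `(ℤ N)^ν × ℤ^μ`, a direct summand of `H`. Hence the
functional `B_ℚ(y, -)` on `L` of any `y ∈ L^∨` extends to `H`, where it is `B(z, -)`, and then
`p y = N z`. So `y ↦ p y` maps `L^∨` onto `N(H) = {(cⱼ N, p b)}` and `L` onto
`p L = {(p cⱼ N, p b)}`, and the coefficients `cⱼ` modulo `p` give `L^∨ / L ≅ (ℤ/p)^ν`.
-/

open Finset MonoidAlgebra

section GroupRingNorm

variable (G : Type*) [Group G] [Fintype G]

noncomputable def groupRingNorm : MonoidAlgebra ℤ G := ∑ x : G, of ℤ G x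

variable {G}

@[simp]
lemma coeff_groupRingNorm (x : G) : (groupRingNorm G).coeff x = 1 := by
  classical
  simp [groupRingNorm, coeff_sum, coeff_single, Finsupp.single_apply]

@[simp]
lemma of_mul_groupRingNorm (a : G) : of ℤ G a * groupRingNorm G = groupRingNorm G := by
  ext x
  simp [coeff_single_mul_apply]

lemma eq_coeff_one_smul_groupRingNorm {g : G} (hg : ∀ x : G, x ∈ Subgroup.zpowers g)
    {a : MonoidAlgebra ℤ G} (ha : of ℤ G g * a = a) : a = a.coeff 1 • groupRingNorm G := by
  have hpow : ∀ k : ℕ, of ℤ G (g ^ k) * a = a := by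
    intro k
    induction k with
    | zero => rw [pow_zero, map_one, one_mul]
    | succ k ih => rw [pow_succ', map_mul, mul_assoc, ih, ha]
  ext x
  obtain ⟨k, rfl⟩ := mem_powers_iff_mem_zpowers.mpr (hg x)
  have := congrArg (coeff · (g ^ k)) (hpow k)
  simp only [of_apply, coeff_single_mul_apply, inv_mul_cancel, one_mul] at this
  rw [coeff_smul, Finsupp.smul_apply, coeff_groupRingNorm, smul_eq_mul, mul_one, this]

lemma sum_range_card_pow {M : Type*} [AddCommMonoid M] {g : G}
    (hg : ∀ x : G, x ∈ Subgroup.zpowers g) (f : G → M) :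
    ∑ i ∈ range (Nat.card G), f (g ^ i) = ∑ x : G, f x := by
  classical
  rw [← IsCyclic.image_range_card hg, sum_image]
  intro i hi j hj hij
  rw [← orderOf_eq_card_of_forall_mem_zpowers hg] at hi hj
  exact pow_injOn_Iio_orderOf (mem_range.mp hi) (mem_range.mp hj) hij

end GroupRingNorm

section CyclicNorm

variable {G : Type*} [Group G] {H : Type*} [AddCommGroup H] [DistribMulAction G H]

def cyclicNorm (g : G) (n : ℕ) : H →+ H where
  toFun x := ∑ i ∈ range n, g ^ i • x
  map_zero' := by simp
  map_add' x y := by simp [sum_add_distrib]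

variable {g : G} {n : ℕ}

lemma cyclicNorm_apply (x : H) : cyclicNorm g n x = ∑ i ∈ range n, g ^ i • x := rfl

lemma smul_cyclicNorm (hgn : g ^ n = 1) (x : H) : g • cyclicNorm g n x = cyclicNorm g n x := by
  have h := (sum_range_succ' (g ^ · • x) n).symm.trans (sum_range_succ (g ^ · • x) n)
  rw [hgn, pow_zero] at h
  rw [cyclicNorm_apply, smul_sum, ← add_right_cancel h]
  simp_rw [smul_smul, pow_succ']

lemma cyclicNorm_mem_fixedSubmodule (hgn : g ^ n = 1) (x : H) :
    cyclicNorm g n x ∈ fixedSubmodule g :=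
  smul_cyclicNorm hgn x

lemma cyclicNorm_of_smul_eq {x : H} (hx : g • x = x) : cyclicNorm g n x = n • x := by
  have hpow (i : ℕ) : g ^ i • x = x :=
    MulAction.mem_stabilizer_iff.mp (pow_mem (MulAction.mem_stabilizer_iff.mpr hx) i)
  simp [cyclicNorm_apply, hpow]

variable (B : H →ₗ[ℤ] H →ₗ[ℤ] ℤ)

lemma form_cyclicNorm_left (hinv : ∀ x y : H, B (g • x) (g • y) = B x y) (x : H) {y : H}
    (hy : g • y = y) : B (cyclicNorm g n x) y = n * B x y := by
  have hpow (i : ℕ) : B (g ^ i • x) y = B x y := by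
    induction i with
    | zero => simp
    | succ i ih =>
      rw [pow_succ', mul_smul, ← ih]
      conv_lhs => rw [← hy]
      exact hinv _ _
  simp [cyclicNorm_apply, hpow]

theorem cyclicNorm_eq_zero_iff_forall_fixed (hn : n ≠ 0) (hgn : g ^ n = 1)
    (hsymm : ∀ x y : H, B x y = B y x) (hinv : ∀ x y : H, B (g • x) (g • y) = B x y)
    (hB : Function.Injective B) (x : H) :
    cyclicNorm g n x = 0 ↔ ∀ y : H, g • y = y → B x y = 0 := by
  have hn' : (n : ℤ) ≠ 0 := by exact_mod_cast hn
  constructor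
  · intro hx y hy
    have h := form_cyclicNorm_left B hinv x hy (n := n)
    rw [hx, map_zero, LinearMap.zero_apply] at h
    exact (mul_eq_zero.mp h.symm).resolve_left hn'
  · intro hx
    apply hB
    ext z
    have h : (n : ℤ) * B (cyclicNorm g n x) z = 0 :=
      calc (n : ℤ) * B (cyclicNorm g n x) z
          = B (cyclicNorm g n z) (cyclicNorm g n x) := by
            rw [form_cyclicNorm_left B hinv z (smul_cyclicNorm hgn x), hsymm]
        _ = n * B x (cyclicNorm g n z) := by
            rw [hsymm, form_cyclicNorm_left B hinv x (smul_cyclicNorm hgn z)]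
        _ = 0 := by rw [hx _ (smul_cyclicNorm hgn z), mul_zero]
    simpa [hn] using h

lemma separatingLeft_domRestrict_fixedSubmodule [IsAddTorsionFree H] (hn : n ≠ 0)
    (hgn : g ^ n = 1) (hsymm : ∀ x y : H, B x y = B y x)
    (hinv : ∀ x y : H, B (g • x) (g • y) = B x y) (hB : Function.Injective B) :
    (B.domRestrict₁₂ (fixedSubmodule g) (fixedSubmodule g)).SeparatingLeft := by
  intro w hw
  have h := (cyclicNorm_eq_zero_iff_forall_fixed B hn hgn hsymm hinv hB w).mpr
    fun y hy => hw ⟨y, hy⟩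
  rw [cyclicNorm_of_smul_eq w.2] at h
  exact Subtype.ext ((smul_eq_zero_iff_right hn).mp h)

end CyclicNorm

instance isLocalizedModule_flip_mk_one (M : Type*) [AddCommGroup M] :
    IsLocalizedModule (nonZeroDivisors ℤ) ((TensorProduct.mk ℤ M ℚ).flip 1) := by
  convert IsLocalizedModule.of_linearEquiv (nonZeroDivisors ℤ) (TensorProduct.mk ℤ ℚ M 1)
    (TensorProduct.comm ℤ ℚ M)
  ext
  simp

instance (M : Type*) [AddCommGroup M] : IsAddTorsionFree (M ⊗[ℤ] ℚ) where
  nsmul_right_injective n hn := by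
    have := IsLocalizedModule.smul_injective ((TensorProduct.mk ℤ M ℚ).flip 1)
      ⟨(n : ℤ), mem_nonZeroDivisors_of_ne_zero (by exact_mod_cast hn)⟩
    simpa only [Submonoid.smul_def, natCast_zsmul] using this

section DualLattice

variable {G : Type*} [Group G] {H : Type*} [AddCommGroup H] [DistribMulAction G H]
  (B : H →ₗ[ℤ] H →ₗ[ℤ] ℤ) {g : G}

lemma latticeInQ_apply (x : fixedSubmodule (H := H) g) : latticeInQ g x = x ⊗ₜ[ℤ] (1 : ℚ) := rfl

lemma pairQ_tmul (x v : fixedSubmodule (H := H) g) (q : ℚ) :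
    pairQ B g x (v ⊗ₜ q) = B v x * q := by
  show B v x • q = _
  rw [zsmul_eq_mul]

lemma pairQ_add_left (x x' : fixedSubmodule (H := H) g) (u : fixedSubmodule g ⊗[ℤ] ℚ) :
    pairQ B g (x + x') u = pairQ B g x u + pairQ B g x' u := by
  induction u using TensorProduct.induction_on with
  | zero => simp
  | tmul v q => simp only [pairQ_tmul, Submodule.coe_add, map_add, Int.cast_add, add_mul]
  | add u u' hu hu' => simp only [map_add, hu, hu']; ring

lemma eq_zero_of_forall_pairQ_eq_zero
    (hB : (B.domRestrict₁₂ (fixedSubmodule g) (fixedSubmodule g)).SeparatingLeft)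
    {u : fixedSubmodule g ⊗[ℤ] ℚ} (hu : ∀ x, pairQ B g x u = 0) : u = 0 := by
  obtain ⟨⟨w, s⟩, hs⟩ :=
    IsLocalizedModule.surj (nonZeroDivisors ℤ)
      ((TensorProduct.mk ℤ (fixedSubmodule g) ℚ).flip 1) u
  simp only [LinearMap.flip_apply, TensorProduct.mk_apply] at hs
  have hw : w = 0 := hB w fun x => by
    have h := congrArg (pairQ B g x) hs
    rw [Submonoid.smul_def, map_zsmul, hu, smul_zero, pairQ_tmul, mul_one] at h
    exact_mod_cast h.symm
  rw [hw, TensorProduct.zero_tmul, ← smul_zero s] at hs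
  exact IsLocalizedModule.smul_injective
    ((TensorProduct.mk ℤ (fixedSubmodule g) ℚ).flip 1) s hs

lemma latticeInQ_injective
    (hB : (B.domRestrict₁₂ (fixedSubmodule g) (fixedSubmodule g)).SeparatingLeft) :
    Function.Injective (latticeInQ (H := H) g) := by
  refine (injective_iff_map_eq_zero _).mpr fun w hw => hB w fun x => ?_
  have h := congrArg (pairQ B g x) hw
  rw [latticeInQ_apply, pairQ_tmul, map_zero, mul_one] at h
  exact_mod_cast h

lemma exists_linearMap_of_mem_dualFixed {y : fixedSubmodule g ⊗[ℤ] ℚ}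
    (hy : y ∈ dualFixed B g) :
    ∃ φ : fixedSubmodule g →ₗ[ℤ] ℤ, ∀ x, pairQ B g x y = φ x := by
  choose φ hφ using hy
  refine ⟨(AddMonoidHom.mk' φ fun x x' => ?_).toIntLinearMap, hφ⟩
  have h := pairQ_add_left B x x' y
  rw [hφ, hφ, hφ] at h
  exact_mod_cast h

lemma exists_addMonoidHom_latticeInQ_eq_nsmul (hι : Function.Injective (latticeInQ (H := H) g))
    {n : ℕ} (hrange : ∀ y ∈ dualFixed B g, n • y ∈ (latticeInQ g).range) :
    ∃ φ : dualFixed B g →+ fixedSubmodule g,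
      ∀ y, latticeInQ g (φ y) = n • (y : fixedSubmodule (H := H) g ⊗[ℤ] ℚ) :=
  ⟨(AddMonoidHom.ofInjective hι).symm.toAddMonoidHom.comp
      (((nsmulAddMonoidHom n).comp (dualFixed B g).subtype).codRestrict _
        fun y => hrange y.1 y.2),
    fun _ => AddMonoidHom.apply_ofInjective_symm hι _⟩

end DualLattice

theorem exists_latticeInQ_cyclicNorm_eq_nsmul {G : Type*} [Group G] {H : Type*} [AddCommGroup H]
    [DistribMulAction G H] (B : H →ₗ[ℤ] H →ₗ[ℤ] ℤ) {g : G} {n : ℕ} (hgn : g ^ n = 1)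
    (hinv : ∀ x y : H, B (g • x) (g • y) = B x y)
    (hsep : (B.domRestrict₁₂ (fixedSubmodule g) (fixedSubmodule g)).SeparatingLeft)
    (hsurj : Function.Surjective B) (π : H →ₗ[ℤ] fixedSubmodule (H := H) g)
    (hπ : ∀ x : fixedSubmodule (H := H) g, π x = x) {y : fixedSubmodule g ⊗[ℤ] ℚ}
    (hy : y ∈ dualFixed B g) :
    ∃ z : H, latticeInQ g ⟨cyclicNorm g n z, cyclicNorm_mem_fixedSubmodule hgn z⟩ = n • y := by
  obtain ⟨φ, hφ⟩ := exists_linearMap_of_mem_dualFixed B hy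
  obtain ⟨z, hz⟩ := hsurj (φ ∘ₗ π)
  refine ⟨z, sub_eq_zero.mp (eq_zero_of_forall_pairQ_eq_zero B hsep fun x => ?_)⟩
  rw [map_sub, latticeInQ_apply, pairQ_tmul, map_nsmul, hφ]
  simp only [form_cyclicNorm_left B hinv z x.2, hz, LinearMap.comp_apply, hπ]
  simp [nsmul_eq_mul]

section Model

variable {G : Type*} [Group G] {H : Type*} [AddCommGroup H] [DistribMulAction G H] {ν μ : ℕ}

def IsEquivariant (e : H ≃+ (Fin ν → MonoidAlgebra ℤ G) × (Fin μ → ℤ)) : Prop :=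
  ∀ (a : G) (x : H), e (a • x) = ((fun n => of ℤ G a * (e x).1 n), (e x).2)

variable (e : H ≃+ (Fin ν → MonoidAlgebra ℤ G) × (Fin μ → ℤ))

-- A fixed vector has components `(fun j => cⱼ • N, b)`; reading `cⱼ` off as the coefficient at `1`
-- recovers its coordinates `(c, b)`.
noncomputable def invariantCoords : H →+ (Fin ν → ℤ) × (Fin μ → ℤ) :=
  AddMonoidHom.mk' (fun x => (fun j => ((e x).1 j).coeff 1, (e x).2)) fun x y => by
    ext <;> simp

noncomputable def invariantCoordsMod (n : ℕ) : H →+ (Fin ν → ZMod n) :=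
  (AddMonoidHom.compLeft (Int.castAddHom (ZMod n)) (Fin ν)).comp
    ((AddMonoidHom.fst _ _).comp (invariantCoords e))

variable {e} in
lemma snd_invariantCoords_cyclicNorm (he : IsEquivariant e) (g : G) (n : ℕ) (z : H) :
    (invariantCoords e (cyclicNorm g n z)).2 = n • (invariantCoords e z).2 := by
  simp only [invariantCoords, AddMonoidHom.mk'_apply, cyclicNorm_apply, map_sum, Prod.snd_sum,
    he _, sum_const, card_range]

variable [Fintype G]

noncomputable def ofInvariantCoords : (Fin ν → ℤ) × (Fin μ → ℤ) →+ H :=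
  AddMonoidHom.mk' (fun c => e.symm (fun j => c.1 j • groupRingNorm G, c.2)) fun c d => by
    rw [← map_add]
    congr 1
    ext <;> simp [add_smul]

variable {e}

lemma smul_ofInvariantCoords (he : IsEquivariant e) (a : G) (c : (Fin ν → ℤ) × (Fin μ → ℤ)) :
    a • ofInvariantCoords e c = ofInvariantCoords e c := by
  apply e.injective
  simp only [ofInvariantCoords, AddMonoidHom.mk'_apply, he a, AddEquiv.apply_symm_apply,
    mul_smul_comm, of_mul_groupRingNorm]

lemma ofInvariantCoords_invariantCoords (he : IsEquivariant e) {g : G}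
    (hg : ∀ x : G, x ∈ Subgroup.zpowers g) {w : H} (hw : g • w = w) :
    ofInvariantCoords e (invariantCoords e w) = w := by
  rw [ofInvariantCoords, AddMonoidHom.mk'_apply, AddEquiv.symm_apply_eq]
  refine Prod.ext (funext fun j => (eq_coeff_one_smul_groupRingNorm hg ?_).symm) rfl
  simpa using congrArg (·.1 j) ((he g w).symm.trans (congrArg e hw))

lemma exists_retraction_fixedSubmodule (he : IsEquivariant e) {g : G}
    (hg : ∀ x : G, x ∈ Subgroup.zpowers g) :
    ∃ π : H →ₗ[ℤ] fixedSubmodule (H := H) g, ∀ x : fixedSubmodule (H := H) g, π x = x :=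
  ⟨((ofInvariantCoords e).comp (invariantCoords e)).toIntLinearMap.codRestrict _
      fun _ => smul_ofInvariantCoords he g _,
    fun x => Subtype.ext (ofInvariantCoords_invariantCoords he hg x.2)⟩

lemma exists_invariantCoords_cyclicNorm_eq (he : IsEquivariant e) {g : G}
    (hg : ∀ x : G, x ∈ Subgroup.zpowers g) (c : Fin ν → ℤ) :
    ∃ z : H, (invariantCoords e (cyclicNorm g (Nat.card G) z)).1 = c := by
  refine ⟨e.symm (fun j => single 1 (c j), 0), funext fun j => ?_⟩
  have hsum : ∑ i ∈ range (Nat.card G), of ℤ G (g ^ i) = groupRingNorm G :=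
    sum_range_card_pow hg _
  simp only [invariantCoords, AddMonoidHom.mk'_apply, cyclicNorm_apply, map_sum e, Prod.fst_sum,
    Finset.sum_apply, he _, AddEquiv.apply_symm_apply, ← sum_mul, hsum]
  simp [coeff_mul_single_apply]

lemma cyclicNorm_eq_nsmul_of_invariantCoords_eq (he : IsEquivariant e) {g : G}
    (hg : ∀ x : G, x ∈ Subgroup.zpowers g) {z : H} {c : Fin ν → ℤ}
    (hc : (invariantCoords e (cyclicNorm g (Nat.card G) z)).1 = Nat.card G • c) :
    cyclicNorm g (Nat.card G) z =
      Nat.card G • ofInvariantCoords e (c, (invariantCoords e z).2) := by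
  rw [← map_nsmul, ← ofInvariantCoords_invariantCoords he hg (smul_cyclicNorm pow_card_eq_one' z)]
  exact congrArg _ (Prod.ext hc (snd_invariantCoords_cyclicNorm he g _ z))

end Model

section Discriminant

variable {G : Type*} [Group G] [Fintype G] {H : Type*} [AddCommGroup H] [DistribMulAction G H]
  {ν μ : ℕ} {e : H ≃+ (Fin ν → MonoidAlgebra ℤ G) × (Fin μ → ℤ)} (B : H →ₗ[ℤ] H →ₗ[ℤ] ℤ)
  {g : G}

lemma ker_invariantCoordsMod_comp_eq (he : IsEquivariant e)
    (hg : ∀ x : G, x ∈ Subgroup.zpowers g)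
    (hι : Function.Injective (latticeInQ (H := H) g))
    (hdual : ∀ y ∈ dualFixed B g, ∃ z : H, latticeInQ g
      ⟨cyclicNorm g (Nat.card G) z, cyclicNorm_mem_fixedSubmodule pow_card_eq_one' z⟩ =
        Nat.card G • y)
    (φ : dualFixed B g →+ fixedSubmodule g)
    (hφ : ∀ y, latticeInQ g (φ y) =
      Nat.card G • (y : fixedSubmodule (H := H) g ⊗[ℤ] ℚ)) :
    ((invariantCoordsMod e (Nat.card G)).comp
        ((fixedSubmodule g).subtype.toAddMonoidHom.comp φ)).ker =
      (latticeInQ g).range.addSubgroupOf (dualFixed B g) := by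
  ext y
  rw [AddMonoidHom.mem_ker, AddSubgroup.mem_addSubgroupOf, AddMonoidHom.mem_range]
  constructor
  · intro hy
    obtain ⟨z, hz⟩ := hdual y y.2
    have hφz := hι ((hφ y).trans hz.symm)
    have hdvd (j : Fin ν) :
        ∃ c : ℤ, (invariantCoords e (cyclicNorm g (Nat.card G) z)).1 j = Nat.card G * c := by
      have h := congrFun hy j
      simp only [invariantCoordsMod, AddMonoidHom.comp_apply, hφz] at h
      exact (ZMod.intCast_zmod_eq_zero_iff_dvd _ _).mp h
    choose c hc using hdvd
    have hNz := cyclicNorm_eq_nsmul_of_invariantCoords_eq he hg (z := z) (c := c)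
      (funext fun j => by rw [hc, Pi.smul_apply, nsmul_eq_mul])
    refine ⟨⟨_, smul_ofInvariantCoords he g (c, (invariantCoords e z).2)⟩,
      nsmul_right_injective (Nat.card_pos (α := G)).ne' ?_⟩
    dsimp only
    rw [← hz, ← map_nsmul]
    exact congrArg _ (Subtype.ext hNz.symm)
  · rintro ⟨w, hw⟩
    have hφw : φ y = Nat.card G • w := hι (by rw [hφ, map_nsmul, hw])
    funext j
    simp [invariantCoordsMod, hφw, -Nat.card_eq_fintype_card]

lemma surjective_invariantCoordsMod_comp (he : IsEquivariant e)
    (hg : ∀ x : G, x ∈ Subgroup.zpowers g) (hinv : ∀ x y : H, B (g • x) (g • y) = B x y)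
    (hι : Function.Injective (latticeInQ (H := H) g)) (φ : dualFixed B g →+ fixedSubmodule g)
    (hφ : ∀ y, latticeInQ g (φ y) =
      Nat.card G • (y : fixedSubmodule (H := H) g ⊗[ℤ] ℚ)) :
    Function.Surjective
      ((invariantCoordsMod e (Nat.card G)).comp
        ((fixedSubmodule g).subtype.toAddMonoidHom.comp φ)) := by
  intro c
  obtain ⟨z, hz⟩ := exists_invariantCoords_cyclicNorm_eq he hg fun j => (c j).cast
  set v : fixedSubmodule (H := H) g :=
    ⟨cyclicNorm g (Nat.card G) z, cyclicNorm_mem_fixedSubmodule pow_card_eq_one' z⟩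
  have hn : (Nat.card G : ℚ) ≠ 0 := by exact_mod_cast (Nat.card_pos (α := G)).ne'
  have hmem : v ⊗ₜ[ℤ] (Nat.card G : ℚ)⁻¹ ∈ dualFixed B g := fun x =>
    ⟨B z x, by rw [pairQ_tmul, form_cyclicNorm_left B hinv z x.2]; push_cast; field_simp⟩
  have hφv : φ ⟨_, hmem⟩ = v := hι (by
    rw [hφ, latticeInQ_apply, ← TensorProduct.tmul_smul, nsmul_eq_mul, mul_inv_cancel₀ hn])
  refine ⟨⟨_, hmem⟩, funext fun j => ?_⟩
  simp only [invariantCoordsMod, AddMonoidHom.comp_apply, LinearMap.toAddMonoidHom_coe,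
    Submodule.coe_subtype, hφv, v, AddMonoidHom.compLeft_apply, AddMonoidHom.coe_fst, hz]
  exact ZMod.intCast_zmod_cast (c j)

theorem nonempty_dualFixed_quotient_addEquiv (he : IsEquivariant e)
    (hg : ∀ x : G, x ∈ Subgroup.zpowers g) (hinv : ∀ x y : H, B (g • x) (g • y) = B x y)
    (hι : Function.Injective (latticeInQ (H := H) g))
    (hdual : ∀ y ∈ dualFixed B g, ∃ z : H, latticeInQ g
      ⟨cyclicNorm g (Nat.card G) z, cyclicNorm_mem_fixedSubmodule pow_card_eq_one' z⟩ =
        Nat.card G • y) :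
    Nonempty ((dualFixed B g ⧸
        ((latticeInQ (H := H) g).range.addSubgroupOf (dualFixed B g))) ≃+
      (Fin ν → ZMod (Nat.card G))) := by
  obtain ⟨φ, hφ⟩ := exists_addMonoidHom_latticeInQ_eq_nsmul B hι fun y hy =>
    (hdual y hy).elim fun _ hz => ⟨_, hz⟩
  exact ⟨(QuotientAddGroup.quotientAddEquivOfEq
    (ker_invariantCoordsMod_comp_eq B he hg hι hdual φ hφ).symm).trans
    (QuotientAddGroup.quotientKerEquivOfSurjective _
      (surjective_invariantCoordsMod_comp B he hg hinv hι φ hφ))⟩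

end Discriminant

/-- Let `G` be cyclic of prime order `p` with generator `g`, and `H` a `ℤ[G]`-module
isomorphic to `(ℤ[G])^ν × ℤ^μ` with trivial action on `ℤ^μ`.  Suppose `H` carries a
`G`-invariant symmetric unimodular bilinear form `B`.  Then (i) the kernel of the norm
endomorphism equals the orthogonal complement of `H^G`, and (ii) the dual lattice
`(H^G)^∨ ⊆ H^G ⊗ ℚ` satisfies `p·(H^G)^∨ ⊆ H^G` and `(H^G)^∨ / H^G ≅ (ℤ/pℤ)^ν`. -/
theorem ker_norm_eq_orthogonal_and_discriminant_of_unimodular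
    (p : ℕ) (hp : p.Prime) {G : Type*} [Group G] (hcard : Nat.card G = p)
    (g : G) (hgen : ∀ x : G, x ∈ Subgroup.zpowers g)
    {H : Type*} [AddCommGroup H] [DistribMulAction G H]
    (ν μ : ℕ)
    (e : H ≃+ (Fin ν → MonoidAlgebra ℤ G) × (Fin μ → ℤ))
    (he : ∀ (a : G) (x : H),
      e (a • x) = ((fun n => MonoidAlgebra.of ℤ G a * (e x).1 n), (e x).2))
    (B : H →ₗ[ℤ] H →ₗ[ℤ] ℤ)
    (hsymm : ∀ x y : H, B x y = B y x)
    (hinv : ∀ x y : H, B (g • x) (g • y) = B x y)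
    (hunimod : Function.Bijective fun x : H => (B x : H →ₗ[ℤ] ℤ)) :
    (∀ x : H, (∑ i ∈ Finset.range p, g ^ i • x) = 0 ↔
      ∀ y : H, g • y = y → B x y = 0) ∧
    (∀ y ∈ dualFixed B g, p • y ∈ (latticeInQ (H := H) g).range) ∧
    Nonempty ((dualFixed B g ⧸
        ((latticeInQ (H := H) g).range.addSubgroupOf (dualFixed B g))) ≃+
      (Fin ν → ZMod p)) := by
  subst hcard
  have : Fintype G := @Fintype.ofFinite G (Nat.finite_of_card_ne_zero hp.ne_zero)
  have : IsAddTorsionFree ((Fin ν → MonoidAlgebra ℤ G) × (Fin μ → ℤ)) := .of_isTorsionFree ℤ _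
  have : IsAddTorsionFree H := e.injective.isAddTorsionFree e.toAddMonoidHom
  have hsep := separatingLeft_domRestrict_fixedSubmodule B hp.ne_zero pow_card_eq_one' hsymm hinv
    hunimod.1
  obtain ⟨π, hπ⟩ := exists_retraction_fixedSubmodule he hgen
  have hdual := fun y (hy : y ∈ dualFixed B g) =>
    exists_latticeInQ_cyclicNorm_eq_nsmul B pow_card_eq_one' hinv hsep hunimod.2 π hπ hy
  exact ⟨cyclicNorm_eq_zero_iff_forall_fixed B hp.ne_zero pow_card_eq_one' hsymm hinv hunimod.1,
    fun y hy => (hdual y hy).elim fun _ hz => ⟨_, hz⟩,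
    nonempty_dualFixed_quotient_addEquiv B he hgen hinv (latticeInQ_injective B hsep) hdual⟩
end

section
/- Let p be an odd prime, let L be a free ℤ-module of finite rank equipped with a negative definite symmetric bilinear form B (i.e. B(x,x) < 0 for all x ≠ 0), and let G be a cyclic group of order p acting on L by B-isometries with no nonzero fixed vectors (L^G = {0}). Then for every v ∈ L with B(v,v) = −2 there exists g ∈ G with B(v, g·v) = 1. -/
/-- Let `p` be an odd prime, `L` a free `ℤ`-module of finite rank with a negative definite
symmetric bilinear form `B`, and `G` a cyclic group of order `p` acting on `L` by
`B`-isometries with no nonzero fixed vectors.  Then for every `v ∈ L` with `B(v,v) = −2`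
there is `g ∈ G` with `B(v, g·v) = 1`. -/
theorem exists_smul_pairing_one_of_minus_two
    {L : Type*} [AddCommGroup L] [Module.Free ℤ L] [Module.Finite ℤ L]
    (B : L →ₗ[ℤ] L →ₗ[ℤ] ℤ)
    (hsymm : ∀ x y : L, B x y = B y x)
    (hneg : ∀ x : L, x ≠ 0 → B x x < 0)
    (p : ℕ) (hp : p.Prime) (hodd : Odd p)
    {G : Type*} [Group G] [IsCyclic G] (hcard : Nat.card G = p)
    [DistribMulAction G L]
    (hiso : ∀ (a : G) (x y : L), B (a • x) (a • y) = B x y)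
    (hfix : ∀ x : L, (∀ a : G, a • x = x) → x = 0) :
    ∀ v : L, B v v = -2 → ∃ a : G, B v (a • v) = 1 := by
  have hGfin : Finite G := Nat.finite_of_card_ne_zero (by rw [hcard]; exact hp.pos.ne')
  have : Fintype G := Fintype.ofFinite G
  classical
  intro v hv
  -- the sum of the orbit is fixed, hence zero
  set s : L := ∑ a : G, a • v with hs
  have hsfix : ∀ b : G, b • s = s := by
    intro b
    rw [hs, Finset.smul_sum]
    refine Fintype.sum_equiv (Equiv.mulLeft b) _ _ ?_
    intro a
    simp [smul_smul]
  have hs0 : s = 0 := hfix s hsfix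
  have hsum : ∑ a : G, B v (a • v) = 0 := by
    have := congrArg (fun x => B v x) hs0
    simpa [hs, map_sum] using this
  have hsum' : ∑ a ∈ Finset.univ.erase (1 : G), B v (a • v) = 2 := by
    have h1 : B v ((1 : G) • v) + ∑ a ∈ Finset.univ.erase (1 : G), B v (a • v)
        = ∑ a : G, B v (a • v) := Finset.add_sum_erase _ (fun a : G => B v (a • v)) (Finset.mem_univ 1)
    rw [hsum] at h1
    simp only [one_smul, hv] at h1
    omega
  -- some term is positive
  have hexists : ∃ a ∈ Finset.univ.erase (1 : G), (0 : ℤ) < B v (a • v) := by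
    have : ∑ a ∈ Finset.univ.erase (1 : G), (0 : ℤ)
        < ∑ a ∈ Finset.univ.erase (1 : G), B v (a • v) := by
      rw [hsum', Finset.sum_const_zero]; norm_num
    exact Finset.exists_lt_of_sum_lt this
  obtain ⟨a, ha, hapos⟩ := hexists
  refine ⟨a, ?_⟩
  by_contra hne
  have hge2 : 2 ≤ B v (a • v) := by omega
  -- Cauchy–Schwarz equality case: v + a•v = 0
  have hvv : B (a • v) (a • v) = -2 := by rw [hiso]; exact hv
  have hsum2 : B (v + a • v) (v + a • v) = 2 * B v (a • v) - 4 := by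
    simp only [map_add, LinearMap.add_apply]
    rw [hsymm (a • v) v, hv, hvv]; ring
  have hzero : v + a • v = 0 := by
    by_contra hnz
    have := hneg _ hnz
    omega
  have hav : a • v = -v := eq_neg_of_add_eq_zero_right hzero
  have ha1 : a ≠ 1 := (Finset.mem_erase.mp ha).1
  have hsq : (a * a) • v = v := by
    rw [mul_smul, hav, smul_neg, hav, neg_neg]
  have hpow : ∀ n : ℕ, (a * a) ^ n • v = v := by
    intro n
    induction n with
    | zero => simp
    | succ n ih => rw [pow_succ, mul_smul, hsq, ih]
  obtain ⟨k, hk⟩ := hodd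
  have hap : a ^ p = 1 := by rw [← hcard]; exact pow_card_eq_one'
  have haa : (a * a) ^ (k + 1) = a := by
    have : (a * a) ^ (k + 1) = a ^ (p + 1) := by
      rw [← sq, ← pow_mul]
      congr 1
      omega
    rw [this, pow_succ, hap, one_mul]
  have : a • v = v := by rw [← haa]; exact hpow (k + 1)
  rw [hav] at this
  have h2v : B v v = 0 := by
    have := congrArg (fun x => B v x) this
    simp only [map_neg] at this
    omega
  omega
end

section
/- The Nikulin lattice N = N_p is an even lattice, i.e. B(x,x) ∈ 2ℤ for every x ∈ N; moreover, every x ∈ N with B(x,x) = −2 lies in the ℤ-span of the basis vectors D_{i,j}. -/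
open scoped BigOperators

namespace Nikulin

noncomputable section

/-- Index set for the basis vectors `D_{i,j}`, `1 ≤ i ≤ ν`, `1 ≤ j ≤ p−1`. -/
abbrev Idx (p ν : ℕ) := Fin ν × Fin (p - 1)

variable (p ν : ℕ)

/-- The Gram matrix of the form `B` on the basis `D_{i,j}`:
`B(D_{i,j}, D_{i,j}) = −2`, `B(D_{i,j}, D_{i,j±1}) = 1`, all other entries `0`. -/
def gram (a b : Idx p ν) : ℚ :=
  if a.1 = b.1 then
    if a.2 = b.2 then -2
    else if a.2.1 + 1 = b.2.1 ∨ b.2.1 + 1 = a.2.1 then 1 else 0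
  else 0

/-- The symmetric bilinear form `B` on `V`, the bilinear extension of the Gram matrix. -/
def Bf : (Idx p ν → ℚ) →ₗ[ℚ] (Idx p ν → ℚ) →ₗ[ℚ] ℚ :=
  LinearMap.mk₂ ℚ (fun x y => ∑ a : Idx p ν, ∑ b : Idx p ν, x a * gram p ν a b * y b)
    (by
      intro x x' y
      rw [← Finset.sum_add_distrib]
      refine Finset.sum_congr rfl fun a _ => ?_
      rw [← Finset.sum_add_distrib]
      refine Finset.sum_congr rfl fun b _ => ?_
      simp only [Pi.add_apply]; ring)
    (by
      intro c x y
      rw [Finset.smul_sum]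
      refine Finset.sum_congr rfl fun a _ => ?_
      rw [Finset.smul_sum]
      refine Finset.sum_congr rfl fun b _ => ?_
      simp only [Pi.smul_apply, smul_eq_mul]; ring)
    (by
      intro x y y'
      rw [← Finset.sum_add_distrib]
      refine Finset.sum_congr rfl fun a _ => ?_
      rw [← Finset.sum_add_distrib]
      refine Finset.sum_congr rfl fun b _ => ?_
      simp only [Pi.add_apply]; ring)
    (by
      intro c x y
      rw [Finset.smul_sum]
      refine Finset.sum_congr rfl fun a _ => ?_
      rw [Finset.smul_sum]
      refine Finset.sum_congr rfl fun b _ => ?_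
      simp only [Pi.smul_apply, smul_eq_mul]; ring)

/-- The basis vector `D_{i,j}` (the index `q = (i, j)` with `j ∈ Fin (p−1)` representing
`j+1 ∈ {1, …, p−1}`). -/
def Dv (q : Idx p ν) : Idx p ν → ℚ := Pi.single q 1

variable (k : Fin ν → ℤ)

/-- The vector `ϖ = Σ_i (k_i/p) Σ_j j·D_{i,j}`. -/
def varpi : Idx p ν → ℚ := fun q => (k q.1 : ℚ) * ((q.2.1 : ℚ) + 1) / p

/-- The Nikulin lattice `N_p`, generated by the `D_{i,j}` together with `ϖ`. -/
def NL : AddSubgroup (Idx p ν → ℚ) :=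
  AddSubgroup.closure (Set.range (Dv p ν) ∪ {varpi p ν k})

/-- The Weyl vector `ϱ = −(1/2) Σ_i Σ_j j(p−j)·D_{i,j}`. -/
def rho : Idx p ν → ℚ :=
  fun q => -(((q.2.1 : ℚ) + 1) * ((p : ℚ) - ((q.2.1 : ℚ) + 1)) / 2)

/-- The lattice `L_p = {x ∈ N_p : B(ϱ, x) ∈ pℤ}`. -/
def LL : AddSubgroup (Idx p ν → ℚ) where
  carrier := {x | x ∈ NL p ν k ∧ ∃ m : ℤ, Bf p ν (rho p ν) x = (p : ℚ) * m}
  zero_mem' := ⟨(NL p ν k).zero_mem, 0, by simp⟩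
  add_mem' := by
    rintro a b ⟨haN, ma, hma⟩ ⟨hbN, mb, hmb⟩
    exact ⟨add_mem haN hbN, ma + mb, by rw [map_add, hma, hmb]; push_cast; ring⟩
  neg_mem' := by
    rintro a ⟨haN, ma, hma⟩
    exact ⟨neg_mem haN, -ma, by rw [map_neg, hma]; push_cast; ring⟩

/-- The dual lattice `S^∨ = {y ∈ V : B(y, s) ∈ ℤ for all s ∈ S}`. -/
def dual (S : AddSubgroup (Idx p ν → ℚ)) : AddSubgroup (Idx p ν → ℚ) where
  carrier := {y | ∀ s ∈ S, ∃ m : ℤ, Bf p ν y s = (m : ℚ)}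
  zero_mem' := by
    intro s hs
    exact ⟨0, by simp⟩
  add_mem' := by
    rintro a b ha hb s hs
    obtain ⟨ma, hma⟩ := ha s hs
    obtain ⟨mb, hmb⟩ := hb s hs
    exact ⟨ma + mb, by rw [map_add, LinearMap.add_apply, hma, hmb]; push_cast; ring⟩
  neg_mem' := by
    rintro a ha s hs
    obtain ⟨m, hm⟩ := ha s hs
    exact ⟨-m, by rw [map_neg, LinearMap.neg_apply, hm]; push_cast; ring⟩

/-- The list of admissible data `(p, ν, k)`:
`(2, 8, (1,…,1))`, `(3, 6, (1,…,1))`, `(5, 4, (1,1,2,2))`, `(7, 3, (1,2,3))`. -/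
def goodCase : Prop :=
  (p = 2 ∧ ∃ h : ν = 8, ∀ i, k i = ![1, 1, 1, 1, 1, 1, 1, 1] (Fin.cast h i)) ∨
  (p = 3 ∧ ∃ h : ν = 6, ∀ i, k i = ![1, 1, 1, 1, 1, 1] (Fin.cast h i)) ∨
  (p = 5 ∧ ∃ h : ν = 4, ∀ i, k i = ![1, 1, 2, 2] (Fin.cast h i)) ∨
  (p = 7 ∧ ∃ h : ν = 3, ∀ i, k i = ![1, 2, 3] (Fin.cast h i))

end

end Nikulin

/-!
Write `x ∈ N_p` as `c • ϖ + d` with `d` integral. The map `D_{i,j} ↦ e_{i,j-1} - e_{i,j}` embeds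
each block `-A_{p-1}` isometrically into `-ℤ^p` and sends `x` to the vector with entries
`c kᵢ / p - t_{i,m}`, where the `t_{i,m}` are integers with `∑ₘ t_{i,m} = c kᵢ`. Hence
`-p B(x, x) = ∑ᵢ (p ∑ₘ t_{i,m}² - (c kᵢ)²)`. Evenness follows from `t² ≡ t (mod 2)`, `2p ∣ ∑ kᵢ²`
and `2 ∣ ∑ kᵢ`. If `p ∤ c`, the `i`-th summand is at least `rᵢ (p - rᵢ)` with `rᵢ = c kᵢ mod p`,
and for each of the four data these add up to more than `2p`, so `B(x, x) ≠ -2`; if `p ∣ c`, then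
`x` is integral.
-/

open Finset

section SumsOfSquares

variable {ι : Type*} (s : Finset ι)

lemma card_mul_sum_sq_sub_sq_sum_sub_const (t : ι → ℤ) (c : ℤ) :
    #s * ∑ m ∈ s, (t m - c) ^ 2 - (∑ m ∈ s, (t m - c)) ^ 2 =
      #s * ∑ m ∈ s, t m ^ 2 - (∑ m ∈ s, t m) ^ 2 := by
  simp only [sub_sq, sum_add_distrib, sum_sub_distrib, ← sum_mul, ← mul_sum, sum_const,
    nsmul_eq_mul]
  ring

/-- Shifting the `tₘ` by the quotient `q` of `∑ tₘ` by `#s` does not change the right-hand side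
and makes the sum equal to the remainder `r`; then `∑ (tₘ - q)² ≥ ∑ (tₘ - q) = r`. -/
lemma emod_mul_sub_emod_le_card_mul_sum_sq_sub_sq_sum (t : ι → ℤ) :
    (∑ m ∈ s, t m) % #s * (#s - (∑ m ∈ s, t m) % #s) ≤
      #s * ∑ m ∈ s, t m ^ 2 - (∑ m ∈ s, t m) ^ 2 := by
  set q := (∑ m ∈ s, t m) / #s
  have hsum : ∑ m ∈ s, (t m - q) = (∑ m ∈ s, t m) % #s := by
    rw [sum_sub_distrib, sum_const, nsmul_eq_mul, Int.emod_def]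
  have hsq : (∑ m ∈ s, t m) % #s ≤ ∑ m ∈ s, (t m - q) ^ 2 :=
    hsum ▸ sum_le_sum fun m _ => Int.le_self_sq (t m - q)
  rw [← card_mul_sum_sq_sub_sq_sum_sub_const s t q, hsum]
  nlinarith [Int.natCast_nonneg #s]

lemma even_sum_sq_iff_even_sum (t : ι → ℤ) : Even (∑ m ∈ s, t m ^ 2) ↔ Even (∑ m ∈ s, t m) := by
  rw [← Int.even_sub, ← sum_sub_distrib]
  exact even_sum _ fun m _ => by simpa [sq, mul_sub] using Int.even_mul_pred_self (t m)

lemma card_mul_sum_sq_div_card_sub (t : ι → ℚ) (hs : s.Nonempty) :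
    #s * ∑ m ∈ s, ((∑ m ∈ s, t m) / #s - t m) ^ 2 =
      #s * ∑ m ∈ s, t m ^ 2 - (∑ m ∈ s, t m) ^ 2 := by
  have : (#s : ℚ) ≠ 0 := Nat.cast_ne_zero.2 hs.card_pos.ne'
  simp only [sub_sq, sum_add_distrib, sum_sub_distrib, ← mul_sum, sum_const, nsmul_eq_mul]
  field_simp
  ring

end SumsOfSquares

namespace Nikulin

variable {p ν : ℕ}

/-- The coordinates of `x` on the `i`-th `A_{p-1}` block in the paper's indexing `1, …, p-1`,
extended by `0` to all of `ℕ` (in particular `blockCoord x i 0 = blockCoord x i p = 0`). -/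
def blockCoord {R : Type*} [Zero R] (x : Idx p ν → R) (i : Fin ν) (m : ℕ) : R :=
  if h : 0 < m ∧ m < p then x (i, ⟨m - 1, by omega⟩) else 0

/-- Blockwise, the isometric embedding of `-A_{p-1}` into `-ℤ^p` given by
`D_{i,j} ↦ e_{i,j-1} - e_{i,j}`. -/
def diffMap : (Idx p ν → ℚ) →ₗ[ℚ] (Fin ν × Fin p → ℚ) where
  toFun x q := blockCoord x q.1 (q.2 + 1) - blockCoord x q.1 q.2
  map_add' x y := by
    ext q
    simp only [blockCoord, Pi.add_apply]
    split_ifs <;> ring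
  map_smul' c x := by
    ext q
    simp only [blockCoord, Pi.smul_apply, smul_eq_mul, RingHom.id_apply]
    split_ifs <;> ring

lemma diffMap_apply (x : Idx p ν → ℚ) (q : Fin ν × Fin p) :
    diffMap x q = blockCoord x q.1 (q.2 + 1) - blockCoord x q.1 q.2 := rfl

lemma diffMap_single (i : Fin ν) (j : Fin (p - 1)) :
    diffMap (Pi.single (i, j) 1) =
      Pi.single (i, Fin.castLE (Nat.sub_le p 1) j) 1 - Pi.single (i, ⟨j + 1, by omega⟩) 1 := by
  ext ⟨i', m⟩
  simp only [diffMap_apply, blockCoord, Pi.sub_apply, Pi.single_apply, Prod.mk.injEq, Fin.ext_iff,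
    Fin.val_castLE]
  split_ifs <;> first | (exfalso; omega) | norm_num

lemma Bf_single (a b : Idx p ν) : Bf p ν (Pi.single a 1) (Pi.single b 1) = gram p ν a b := by
  simp [Bf, Pi.single_apply]

lemma Bf_eq_neg_dotProduct (x y : Idx p ν → ℚ) : Bf p ν x y = -(diffMap x ⬝ᵥ diffMap y) := by
  have h : Bf p ν = -(dotProductBilin ℚ ℚ).compl₁₂ diffMap diffMap := by
    refine LinearMap.ext_basis (Pi.basisFun ℚ _) (Pi.basisFun ℚ _) fun ⟨i, j⟩ ⟨i', j'⟩ => ?_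
    simp only [Pi.basisFun_apply, Bf_single, LinearMap.neg_apply, LinearMap.compl₁₂_apply,
      dotProductBilin_apply_apply, diffMap_single, sub_dotProduct, dotProduct_sub,
      single_dotProduct, Pi.single_apply, Prod.mk.injEq, Fin.ext_iff, Fin.val_castLE, gram]
    split_ifs <;> first | (exfalso; omega) | norm_num
  rw [h]
  rfl

lemma sum_diffMap (x : Idx p ν → ℚ) (i : Fin ν) : ∑ m : Fin p, diffMap x (i, m) = 0 := by
  simp only [diffMap_apply]
  rw [Fin.sum_univ_eq_sum_range (fun m => blockCoord x i (m + 1) - blockCoord x i m),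
    sum_range_sub]
  simp [blockCoord]

lemma diffMap_varpi (k : Fin ν → ℤ) (q : Fin ν × Fin p) :
    diffMap (varpi p ν k) q = k q.1 / p - if (q.2 : ℕ) + 1 = p then k q.1 else 0 := by
  obtain ⟨i, m, hm⟩ := q
  simp only [diffMap_apply, blockCoord, varpi, Nat.add_sub_cancel]
  rcases Nat.eq_zero_or_pos m with rfl | hm0
  · split_ifs <;> first | (exfalso; omega) | skip
    · simp
    · subst_vars; simp
  · split_ifs <;> first | (exfalso; omega) | skip
    · push_cast [Nat.cast_pred hm0]; ring
    · subst_vars; push_cast [Nat.cast_pred hm0]; field_simp; ring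

lemma diffMap_intCast (d : Idx p ν → ℤ) (q : Fin ν × Fin p) :
    diffMap (fun a => (d a : ℚ)) q =
      ((blockCoord d q.1 (q.2 + 1) - blockCoord d q.1 q.2 : ℤ) : ℚ) := by
  simp only [diffMap_apply, blockCoord, Int.cast_sub, apply_dite (Int.cast : ℤ → ℚ), Int.cast_zero]

lemma exists_eq_zsmul_varpi_add_intCast {k : Fin ν → ℤ} {x : Idx p ν → ℚ} (hx : x ∈ NL p ν k) :
    ∃ (c : ℤ) (d : Idx p ν → ℤ), x = c • varpi p ν k + fun a => (d a : ℚ) := by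
  induction hx using AddSubgroup.closure_induction with
  | mem y hy =>
    rcases hy with ⟨a, rfl⟩ | rfl
    · exact ⟨0, Pi.single a 1, by ext b; simp [Dv, Pi.single_apply]⟩
    · exact ⟨1, 0, by ext; simp⟩
  | zero => exact ⟨0, 0, by ext; simp⟩
  | add y z _ _ hy hz =>
    obtain ⟨c, d, rfl⟩ := hy
    obtain ⟨c', d', rfl⟩ := hz
    exact ⟨c + c', d + d', by ext; simp; ring⟩
  | neg y _ hy =>
    obtain ⟨c, d, rfl⟩ := hy
    exact ⟨-c, -d, by ext; simp; ring⟩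

lemma intCast_mem_closure_range_Dv (d : Idx p ν → ℤ) :
    (fun a => (d a : ℚ)) ∈ AddSubgroup.closure (Set.range (Dv p ν)) := by
  have h : (fun a => (d a : ℚ)) = ∑ a, d a • Dv p ν a := by
    ext b
    simp [Dv, Pi.single_apply]
  rw [h]
  exact AddSubgroup.sum_mem _ fun a _ =>
    AddSubgroup.zsmul_mem _ (AddSubgroup.subset_closure (Set.mem_range_self a)) _

lemma exists_mul_neg_Bf_self (hp : 0 < p) (k : Fin ν → ℤ) (c : ℤ) (d : Idx p ν → ℤ) :
    let x := c • varpi p ν k + fun a => (d a : ℚ)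
    ∃ t : Fin ν → Fin p → ℤ, (∀ i, ∑ m, t i m = c * k i) ∧
      p * -Bf p ν x x = ((∑ i, (p * ∑ m, t i m ^ 2 - (c * k i) ^ 2) : ℤ) : ℚ) := by
  intro x
  set t : Fin ν → Fin p → ℤ := fun i m =>
    (if (m : ℕ) + 1 = p then c * k i else 0) - (blockCoord d i (m + 1) - blockCoord d i m)
  have hdiff (i : Fin ν) (m : Fin p) : diffMap x (i, m) = c * k i / p - t i m := by
    rw [map_add, map_zsmul, Pi.add_apply, Pi.smul_apply, diffMap_varpi, diffMap_intCast]
    simp only [t]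
    split_ifs <;> push_cast <;> ring
  have hsum (i : Fin ν) : ∑ m, t i m = c * k i := by
    have h := sum_diffMap x i
    simp only [hdiff, sum_sub_distrib, sum_const, card_univ, Fintype.card_fin, nsmul_eq_mul] at h
    field_simp at h
    exact_mod_cast (sub_eq_zero.1 h).symm
  refine ⟨t, hsum, ?_⟩
  rw [Bf_eq_neg_dotProduct, neg_neg, dotProduct, Fintype.sum_prod_type, mul_sum]
  push_cast
  refine sum_congr rfl fun i _ => ?_
  have h := card_mul_sum_sq_div_card_sub univ (fun m => (t i m : ℚ)) ⟨⟨0, hp⟩, mem_univ _⟩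
  simp only [card_univ, Fintype.card_fin] at h
  have hsumq : ((c : ℚ) * k i) = ∑ m, (t i m : ℚ) := by exact_mod_cast (hsum i).symm
  simpa only [← sq, hdiff, hsumq] using h

/-- `p` times the minimal norm `-B(x, x)` of the vectors `x ≡ c • ϖ` modulo the `D_{i,j}`. -/
def cosetMinNorm (p : ℕ) (k : Fin ν → ℤ) (c : ℤ) : ℤ :=
  ∑ i, c * k i % p * (p - c * k i % p)

lemma cosetMinNorm_emod (k : Fin ν → ℤ) (c : ℤ) :
    cosetMinNorm p k (c % p) = cosetMinNorm p k c := by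
  simp only [cosetMinNorm, ((Int.mod_modEq c p).mul_right _).eq]

lemma lt_cosetMinNorm_of_forall_lt (hp : 0 < p) {k : Fin ν → ℤ} {b : ℤ}
    (h : ∀ r : ℤ, 0 < r → r < p → b < cosetMinNorm p k r) {c : ℤ} (hc : ¬ (p : ℤ) ∣ c) :
    b < cosetMinNorm p k c := by
  rw [← cosetMinNorm_emod]
  have hp' : (0 : ℤ) < p := by exact_mod_cast hp
  refine h _ (lt_of_le_of_ne (Int.emod_nonneg c hp'.ne') fun h0 => hc ?_)
    (Int.emod_lt_of_pos c hp')
  exact Int.dvd_of_emod_eq_zero h0.symm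

lemma cosetMinNorm_le {k : Fin ν → ℤ} {c : ℤ} {t : Fin ν → Fin p → ℤ}
    (ht : ∀ i, ∑ m, t i m = c * k i) :
    cosetMinNorm p k c ≤ ∑ i, (p * ∑ m, t i m ^ 2 - (c * k i) ^ 2) := by
  refine sum_le_sum fun i _ => ?_
  have h := emod_mul_sub_emod_le_card_mul_sum_sq_sub_sq_sum univ (t i)
  rwa [card_univ, Fintype.card_fin, ht i] at h

theorem even_Bf_self_of_mem_NL (hp : 0 < p) {k : Fin ν → ℤ} (hsq : 2 * (p : ℤ) ∣ ∑ i, k i ^ 2)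
    (hsum : Even (∑ i, k i)) {x : Idx p ν → ℚ} (hx : x ∈ NL p ν k) :
    ∃ n : ℤ, Bf p ν x x = 2 * n := by
  obtain ⟨c, d, rfl⟩ := exists_eq_zsmul_varpi_add_intCast hx
  obtain ⟨t, ht, hB⟩ := exists_mul_neg_Bf_self hp k c d
  obtain ⟨e, he⟩ := hsq
  have hN : ∑ i, (p * ∑ m, t i m ^ 2 - (c * k i) ^ 2) =
      p * ((∑ i, ∑ m, t i m ^ 2) - 2 * c ^ 2 * e) := by
    simp only [sum_sub_distrib, ← mul_sum, mul_pow, he]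
    ring
  have heven : Even (∑ i, ∑ m, t i m ^ 2) := by
    rw [← Fintype.sum_prod_type', even_sum_sq_iff_even_sum, Fintype.sum_prod_type']
    simpa only [ht, ← mul_sum] using hsum.mul_left c
  obtain ⟨a, ha⟩ := heven
  refine ⟨c ^ 2 * e - a, mul_left_cancel₀ (Nat.cast_ne_zero.2 hp.ne' : (p : ℚ) ≠ 0) ?_⟩
  rw [← neg_neg (Bf p ν _ _), mul_neg, hB, hN, ha]
  push_cast
  ring

theorem mem_closure_range_Dv_of_Bf_self_eq_neg_two (hp : 0 < p) {k : Fin ν → ℤ}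
    (hres : ∀ c : ℤ, ¬ (p : ℤ) ∣ c → 2 * p < cosetMinNorm p k c) {x : Idx p ν → ℚ}
    (hx : x ∈ NL p ν k) (hB : Bf p ν x x = -2) :
    x ∈ AddSubgroup.closure (Set.range (Dv p ν)) := by
  obtain ⟨c, d, rfl⟩ := exists_eq_zsmul_varpi_add_intCast hx
  by_cases hc : (p : ℤ) ∣ c
  · obtain ⟨c, rfl⟩ := hc
    convert intCast_mem_closure_range_Dv fun a => c * k a.1 * (a.2 + 1) + d a using 1
    ext a
    simp only [Pi.add_apply, zsmul_eq_mul, Pi.mul_apply, Pi.intCast_apply, varpi]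
    push_cast
    field_simp
  · obtain ⟨t, ht, hN⟩ := exists_mul_neg_Bf_self hp k c d
    rw [hB, neg_neg] at hN
    have h := (hres c hc).trans_le (cosetMinNorm_le ht)
    have : (∑ i, (p * ∑ m, t i m ^ 2 - (c * k i) ^ 2) : ℤ) = p * 2 := by exact_mod_cast hN.symm
    omega

lemma goodCase.conditions {k : Fin ν → ℤ} (hk : goodCase p ν k) :
    0 < p ∧ 2 * (p : ℤ) ∣ ∑ i, k i ^ 2 ∧ Even (∑ i, k i) ∧
      ∀ c : ℤ, ¬ (p : ℤ) ∣ c → 2 * p < cosetMinNorm p k c := by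
  rcases hk with ⟨rfl, rfl, hk⟩ | ⟨rfl, rfl, hk⟩ | ⟨rfl, rfl, hk⟩ | ⟨rfl, rfl, hk⟩ <;>
  obtain rfl := funext hk <;>
  exact ⟨by norm_num, by decide, by decide,
    fun c => lt_cosetMinNorm_of_forall_lt (by norm_num) fun r _ _ => by interval_cases r <;> decide⟩

end Nikulin

open Nikulin

/-- The Nikulin lattice `N_p` is even, and every `(−2)`-vector of `N_p` lies in the `ℤ`-span of the basis vectors `D_{i,j}`. -/
theorem nikulinLattice_even_and_rootsInD (p ν : ℕ) (k : Fin ν → ℤ) (hk : goodCase p ν k) :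
    (∀ x ∈ NL p ν k, ∃ m : ℤ, Bf p ν x x = 2 * m) ∧
    (∀ x ∈ NL p ν k, Bf p ν x x = -2 → x ∈ AddSubgroup.closure (Set.range (Dv p ν))) := by
  obtain ⟨hp, hsq, hsum, hres⟩ := hk.conditions
  exact ⟨fun x hx => even_Bf_self_of_mem_NL hp hsq hsum hx,
    fun x hx hB => mem_closure_range_Dv_of_Bf_self_eq_neg_two hp hres hx hB⟩
end

section
/- Set ϖ_i := (1/p)·Σ_{j=1}^{p−1} j·D_{i,j} for 1 ≤ i ≤ ν, and let D denote the ℤ-span of the basis vectors D_{i,j}. Then the dual lattice N^∨ of the Nikulin lattice N = N_p equals the set of all elements of the form d + Σ_{i=1}^{ν} l_i·ϖ_i with d ∈ D, l_1, …, l_ν ∈ ℤ and Σ_{i=1}^{ν} k_i l_i ≡ 0 (mod p). -/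
open scoped BigOperators

namespace Nikulin

noncomputable section
variable (p ν : ℕ)

/-- The fundamental weight vector `ϖ_i = (1/p) Σ_j j·D_{i,j}`. -/
def varpI (i : Fin ν) : Idx p ν → ℚ :=
  fun q => if q.1 = i then ((q.2.1 : ℚ) + 1) / p else 0

end

end Nikulin

/-!
The vectors `ϖ_i` are dual to the last simple roots of the chains: `B(x, ϖ_i) = -x_{i,p-1}`, and
`B(ϖ_i, ϖ_{i'}) = -δ_{i i'} (p-1)/p`. Since `B(x, D_{i,j}) = x_{i,j-1} - 2 x_{i,j} + x_{i,j+1}`,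
running this recursion downwards from `j = p - 1` shows that `x` is integral as soon as all
`B(x, D_{i,j})` and all `B(x, ϖ_i)` are integers.

For `y ∈ N^∨` the numbers `l_i := B(y, p ϖ_i)` are integers because `p ϖ_i ∈ D`; the vector
`y - Σ l_i ϖ_i` passes the integrality test, and `B(y, ϖ) = Σ k_i l_i / p ∈ ℤ` is the congruence.
Conversely `B(d + Σ l_i ϖ_i, ϖ) ≡ -((p-1)/p) Σ k_i l_i` modulo `ℤ`.
-/

theorem AddSubgroup.mem_of_second_diff_mem {G : Type*} [AddCommGroup G] {S : AddSubgroup G}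
    {f : ℕ → G} {n : ℕ} (hn : f n ∈ S) (hn₁ : f (n + 1) ∈ S)
    (hstep : ∀ t < n, f t - 2 • f (t + 1) + f (t + 2) ∈ S) {t : ℕ} (ht : t ≤ n) : f t ∈ S := by
  refine (Nat.decreasingInduction (motive := fun t _ => f t ∈ S ∧ f (t + 1) ∈ S)
    (fun t ht ⟨h₁, h₂⟩ => ⟨?_, h₁⟩) ⟨hn, hn₁⟩ ht).1
  have h := S.add_mem (S.sub_mem (hstep t ht) h₂) (S.nsmul_mem h₁ 2)
  convert h using 1
  abel

namespace Nikulin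

variable {p ν : ℕ}

local notation "𝔻" => AddSubgroup.closure (Set.range (Dv p ν))

-- A rational number is an integer iff it lies in `(⊥ : Subring ℚ)`, the image of `ℤ`.

theorem mem_closure_range_Dv_iff {x : Idx p ν → ℚ} :
    x ∈ 𝔻 ↔ ∀ q, x q ∈ (⊥ : Subring ℚ) := by
  constructor
  · intro hx q
    refine (AddSubgroup.closure_le
      (AddSubgroup.pi Set.univ fun _ => (⊥ : Subring ℚ).toAddSubgroup)).2 ?_ hx q (Set.mem_univ q)
    rintro _ ⟨a, rfl⟩ q -
    by_cases h : q = a <;> simp [Dv, h]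
  · intro hx
    rw [← Finset.univ_sum_single x]
    refine AddSubgroup.sum_mem _ fun q _ => ?_
    obtain ⟨m, hm⟩ := Subring.mem_bot.1 (hx q)
    rw [← hm, ← zsmul_one, Pi.single_smul']
    exact AddSubgroup.zsmul_mem _ (AddSubgroup.subset_closure (Set.mem_range_self q)) m

theorem mem_dual_closure_iff {S : Set (Idx p ν → ℚ)} {y : Idx p ν → ℚ} :
    y ∈ dual p ν (AddSubgroup.closure S) ↔ ∀ s ∈ S, Bf p ν y s ∈ (⊥ : Subring ℚ) := by
  have h : y ∈ dual p ν (AddSubgroup.closure S) ↔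
      AddSubgroup.closure S ≤ (⊥ : Subring ℚ).toAddSubgroup.comap (Bf p ν y).toAddMonoidHom :=
    forall₂_congr fun s _ => exists_congr fun _ => eq_comm
  rw [h, AddSubgroup.closure_le]
  rfl

theorem Bf_symm (x z : Idx p ν → ℚ) : Bf p ν x z = Bf p ν z x := by
  simp only [Bf, LinearMap.mk₂_apply]
  rw [Finset.sum_comm]
  refine Finset.sum_congr rfl fun a _ => Finset.sum_congr rfl fun b _ => ?_
  have : gram p ν a b = gram p ν b a := by
    unfold gram
    split_ifs <;> first | rfl | omega
  rw [this]; ring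

theorem Bf_Dv (x : Idx p ν → ℚ) (q : Idx p ν) :
    Bf p ν x (Dv p ν q) = ∑ a, x a * gram p ν a q := by
  simp [Bf, Dv, Pi.single_apply]

theorem Bf_eq_sum_mul_Bf_Dv (x z : Idx p ν → ℚ) :
    Bf p ν x z = ∑ a, z a * Bf p ν x (Dv p ν a) := by
  conv_lhs => rw [← Finset.univ_sum_single z]
  simp only [map_sum, Dv]
  refine Finset.sum_congr rfl fun a _ => ?_
  rw [← smul_eq_mul, ← LinearMap.map_smul, ← Pi.single_smul', smul_eq_mul, mul_one]

/-- Row `i` of `x` as a sequence indexed by the positions `1, …, p - 1` of the `A_{p-1}` chain,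
extended by zero. -/
def row (x : Idx p ν → ℚ) (i : Fin ν) (t : ℕ) : ℚ :=
  if h : 0 < t ∧ t < p then x (i, ⟨t - 1, by omega⟩) else 0

theorem row_succ (x : Idx p ν → ℚ) (i : Fin ν) (j : Fin (p - 1)) : row x i (j + 1) = x (i, j) := by
  rw [row, dif_pos (by omega)]
  rfl

theorem row_mem (x : Idx p ν → ℚ) (hx : ∀ q, x q ∈ (⊥ : Subring ℚ)) (i : Fin ν) (t : ℕ) :
    row x i t ∈ (⊥ : Subring ℚ) := by
  unfold row
  split_ifs
  exacts [hx _, zero_mem _]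

theorem sum_ite_eq_row (x : Idx p ν → ℚ) (i : Fin ν) (t : ℕ) :
    ∑ j : Fin (p - 1), (if (j : ℕ) + 1 = t then x (i, j) else 0) = row x i t := by
  unfold row
  split_ifs with h
  · rw [Finset.sum_eq_single ⟨t - 1, by omega⟩
      (fun j _ hj => if_neg fun hjt => hj (by ext; simp; omega)) (by simp), if_pos (by simp; omega)]
  · exact Finset.sum_eq_zero fun j _ => if_neg (by omega)

theorem Bf_Dv_eq_row (x : Idx p ν → ℚ) (i : Fin ν) (j : Fin (p - 1)) :
    Bf p ν x (Dv p ν (i, j)) = row x i j - 2 * row x i (j + 1) + row x i (j + 2) := by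
  have hterm : ∀ j' : Fin (p - 1), x (i, j') * gram p ν (i, j') (i, j) =
      (if (j' : ℕ) + 1 = j then x (i, j') else 0)
        - 2 * (if (j' : ℕ) + 1 = j + 1 then x (i, j') else 0)
        + (if (j' : ℕ) + 1 = j + 2 then x (i, j') else 0) := by
    intro j'
    simp only [gram, if_true, Fin.ext_iff]
    split_ifs <;> first | omega | ring
  rw [Bf_Dv, Fintype.sum_prod_type, Finset.sum_eq_single i (fun i' _ hi' => by simp [gram, hi'])
    (by simp), Finset.sum_congr rfl fun j' _ => hterm j']
  simp only [Finset.sum_add_distrib, Finset.sum_sub_distrib, ← Finset.mul_sum, sum_ite_eq_row]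

theorem Bf_Dv_mem_of_mem {x : Idx p ν → ℚ} (hx : x ∈ 𝔻) (q : Idx p ν) :
    Bf p ν x (Dv p ν q) ∈ (⊥ : Subring ℚ) := by
  have hrow := row_mem x (mem_closure_range_Dv_iff.1 hx) q.1
  rw [Bf_Dv_eq_row]
  exact add_mem (sub_mem (hrow _) (mul_mem (natCast_mem _ 2) (hrow _))) (hrow _)

theorem row_varpI (i i' : Fin ν) (t : ℕ) :
    row (varpI p ν i) i' t = if i' = i ∧ t < p then (t : ℚ) / p else 0 := by
  unfold row varpI
  by_cases hi : i' = i
  · by_cases ht : 0 < t ∧ t < p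
    · simp [hi, ht, Nat.cast_sub (by omega : 1 ≤ t)]
    · rcases Nat.eq_zero_or_pos t with rfl | _ <;> simp_all
  · simp [hi]

theorem Bf_varpI_Dv (i : Fin ν) (q : Idx p ν) :
    Bf p ν (varpI p ν i) (Dv p ν q) = if q.1 = i ∧ (q.2 : ℕ) + 1 = p - 1 then -1 else 0 := by
  obtain ⟨i', j⟩ := q
  have hp : (p : ℚ) ≠ 0 := by have := j.2; norm_cast; omega
  rw [Bf_Dv_eq_row, row_varpI, row_varpI, row_varpI]
  by_cases hi : i' = i
  · subst hi
    simp only [true_and, if_pos (show (j : ℕ) < p by omega), if_pos (show (j : ℕ) + 1 < p by omega)]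
    by_cases hj : (j : ℕ) + 1 = p - 1
    · rw [if_neg (by omega), if_pos hj]
      have : ((j : ℕ) : ℚ) + 2 = p := by norm_cast; omega
      field_simp
      push_cast
      linear_combination -this
    · rw [if_pos (by omega), if_neg hj]
      field_simp
      push_cast
      ring
  · simp [hi]

theorem Bf_varpI_Dv_mem (i : Fin ν) (q : Idx p ν) :
    Bf p ν (varpI p ν i) (Dv p ν q) ∈ (⊥ : Subring ℚ) := by
  rw [Bf_varpI_Dv]
  split_ifs
  exacts [neg_mem (one_mem _), zero_mem _]

theorem Bf_varpI_right (x : Idx p ν → ℚ) (i : Fin ν) :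
    Bf p ν x (varpI p ν i) = -row x i (p - 1) := by
  rw [Bf_symm, Bf_eq_sum_mul_Bf_Dv, Fintype.sum_prod_type,
    Finset.sum_eq_single i (fun i' _ hi' => by simp [Bf_varpI_Dv, hi']) (by simp),
    ← sum_ite_eq_row, ← Finset.sum_neg_distrib]
  refine Finset.sum_congr rfl fun j _ => ?_
  rw [Bf_varpI_Dv]
  split_ifs <;> simp_all

theorem Bf_sum_smul_varpI_varpI (hp : p ≠ 0) (a : Fin ν → ℚ) (i : Fin ν) :
    Bf p ν (∑ i', a i' • varpI p ν i') (varpI p ν i) = -((p - 1) / p) * a i := by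
  rw [map_sum, LinearMap.sum_apply]
  simp only [map_smul, LinearMap.smul_apply, Bf_varpI_right, row_varpI, show p - 1 < p by omega,
    and_true, Nat.cast_pred (Nat.pos_of_ne_zero hp), smul_eq_mul, mul_neg, mul_ite, mul_zero,
    Finset.sum_neg_distrib, Finset.sum_ite_eq, Finset.mem_univ, if_true, neg_mul, neg_inj]
  ring

theorem varpi_eq_sum_smul_varpI (k : Fin ν → ℤ) : varpi p ν k = ∑ i, (k i : ℚ) • varpI p ν i := by
  ext q
  simp [varpi, varpI, mul_div_assoc]

theorem natCast_smul_varpI_mem (hp : p ≠ 0) (i : Fin ν) : (p : ℚ) • varpI p ν i ∈ 𝔻 := by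
  rw [mem_closure_range_Dv_iff]
  intro q
  have : (p : ℚ) ≠ 0 := by exact_mod_cast hp
  by_cases hi : q.1 = i
  · simpa [varpI, hi, mul_div_cancel₀ _ this] using natCast_mem (⊥ : Subring ℚ) ((q.2 : ℕ) + 1)
  · simp [varpI, hi]

theorem mem_closure_range_Dv_of_Bf_mem {x : Idx p ν → ℚ}
    (hD : ∀ q, Bf p ν x (Dv p ν q) ∈ (⊥ : Subring ℚ))
    (hϖ : ∀ i, Bf p ν x (varpI p ν i) ∈ (⊥ : Subring ℚ)) : x ∈ 𝔻 := by
  rw [mem_closure_range_Dv_iff]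
  rintro ⟨i, j⟩
  rw [← row_succ x i j]
  refine AddSubgroup.mem_of_second_diff_mem (S := (⊥ : Subring ℚ).toAddSubgroup) (n := p - 1)
    ?_ ?_ (fun t ht => ?_) (by omega)
  · simpa [Bf_varpI_right] using neg_mem (hϖ i)
  · simp [row, show ¬(p - 1 + 1 < p) by omega]
  · simpa [Bf_Dv_eq_row, nsmul_eq_mul] using hD (i, ⟨t, ht⟩)

theorem exists_add_sum_smul_varpI_of_mem_dual (hp : p ≠ 0) {k : Fin ν → ℤ} {y : Idx p ν → ℚ}
    (hy : y ∈ dual p ν (NL p ν k)) :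
    ∃ d ∈ 𝔻, ∃ l : Fin ν → ℤ, (p : ℤ) ∣ ∑ i, k i * l i ∧ y = d + ∑ i, (l i : ℚ) • varpI p ν i := by
  have hp' : (p : ℚ) ≠ 0 := by exact_mod_cast hp
  rw [NL, mem_dual_closure_iff] at hy
  have hD : ∀ q, Bf p ν y (Dv p ν q) ∈ (⊥ : Subring ℚ) := fun q => hy _ (Or.inl ⟨q, rfl⟩)
  have hyD : y ∈ dual p ν 𝔻 := mem_dual_closure_iff.2 (by rintro _ ⟨q, rfl⟩; exact hD q)
  choose l hl using fun i => hyD _ (natCast_smul_varpI_mem hp i)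
  have hyϖ : ∀ i, Bf p ν y (varpI p ν i) = l i / p := fun i => by
    rw [← hl, map_smul, smul_eq_mul, mul_div_cancel_left₀ _ hp']
  refine ⟨y - ∑ i, (l i : ℚ) • varpI p ν i,
    mem_closure_range_Dv_of_Bf_mem (fun q => ?_) (fun i => ?_), l, ?_, by abel⟩
  · simp only [map_sub, map_sum, map_smul, LinearMap.sub_apply, LinearMap.sum_apply,
      LinearMap.smul_apply, smul_eq_mul]
    exact sub_mem (hD q) (sum_mem fun i _ => mul_mem (intCast_mem _ _) (Bf_varpI_Dv_mem i q))
  · rw [map_sub, LinearMap.sub_apply, Bf_sum_smul_varpI_varpI hp, hyϖ]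
    convert intCast_mem (⊥ : Subring ℚ) (l i) using 1
    field_simp
    ring
  · obtain ⟨m, hm⟩ := Subring.mem_bot.1 (hy _ (Or.inr rfl))
    refine ⟨m, Int.cast_injective (α := ℚ) ?_⟩
    rw [varpi_eq_sum_smul_varpI, map_sum] at hm
    simp only [map_smul, smul_eq_mul, hyϖ] at hm
    push_cast
    rw [hm, Finset.mul_sum]
    refine Finset.sum_congr rfl fun i _ => ?_
    field_simp

theorem add_sum_smul_varpI_mem_dual (hp : p ≠ 0) {k l : Fin ν → ℤ} {d : Idx p ν → ℚ} (hd : d ∈ 𝔻)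
    (hkl : (p : ℤ) ∣ ∑ i, k i * l i) : d + ∑ i, (l i : ℚ) • varpI p ν i ∈ dual p ν (NL p ν k) := by
  rw [NL, mem_dual_closure_iff]
  rintro _ (⟨q, rfl⟩ | rfl)
  · simp only [map_add, map_sum, map_smul, LinearMap.add_apply, LinearMap.sum_apply,
      LinearMap.smul_apply, smul_eq_mul]
    exact add_mem (Bf_Dv_mem_of_mem hd q)
      (sum_mem fun i _ => mul_mem (intCast_mem _ _) (Bf_varpI_Dv_mem i q))
  · obtain ⟨m, hm⟩ := hkl
    rw [varpi_eq_sum_smul_varpI, map_add, LinearMap.add_apply, map_sum, map_sum]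
    simp only [map_smul, smul_eq_mul, Bf_sum_smul_varpI_varpI hp, Bf_varpI_right]
    refine add_mem (sum_mem fun i _ => mul_mem (intCast_mem _ _)
      (neg_mem (row_mem d (mem_closure_range_Dv_iff.1 hd) i _))) ?_
    have hm' : ∑ i, (k i : ℚ) * l i = p * m := by exact_mod_cast hm
    convert intCast_mem (⊥ : Subring ℚ) (-(p - 1) * m) using 1
    have hp' : (p : ℚ) ≠ 0 := by exact_mod_cast hp
    calc ∑ i, (k i : ℚ) * (-((p - 1) / p) * l i) = -((p - 1) / p) * ∑ i, (k i : ℚ) * l i := by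
          rw [Finset.mul_sum]; exact Finset.sum_congr rfl fun i _ => by ring
      _ = _ := by rw [hm']; push_cast; field_simp

end Nikulin

open Nikulin

theorem nikulinLattice_dual_description_general (p ν : ℕ) (k : Fin ν → ℤ) :
    ∀ y : Idx p ν → ℚ,
      y ∈ dual p ν (NL p ν k) ↔
        ∃ d ∈ AddSubgroup.closure (Set.range (Dv p ν)), ∃ l : Fin ν → ℤ,
          (p : ℤ) ∣ (∑ i, k i * l i) ∧ y = d + ∑ i, (l i : ℚ) • varpI p ν i := by
  intro y
  obtain rfl | hp := eq_or_ne p 0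
  · have : IsEmpty (Idx 0 ν) := ⟨fun q => absurd q.2.2 (Nat.not_lt_zero _)⟩
    exact ⟨fun _ => ⟨0, zero_mem _, 0, by simp, Subsingleton.elim _ _⟩,
      fun _ => Subsingleton.elim 0 y ▸ zero_mem _⟩
  refine ⟨exists_add_sum_smul_varpI_of_mem_dual hp, ?_⟩
  rintro ⟨d, hd, l, hkl, rfl⟩
  exact add_sum_smul_varpI_mem_dual hp hd hkl

/-- The dual of the Nikulin lattice consists of the elements `d + Σ l_i ϖ_i` with `d` in the span of the `D_{i,j}` and `Σ k_i l_i ≡ 0 (mod p)`. -/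
theorem nikulinLattice_dual_description (p ν : ℕ) (k : Fin ν → ℤ) (hk : goodCase p ν k) :
    ∀ y : Idx p ν → ℚ,
      y ∈ dual p ν (NL p ν k) ↔
        ∃ d ∈ AddSubgroup.closure (Set.range (Dv p ν)), ∃ l : Fin ν → ℤ,
          (p : ℤ) ∣ (∑ i, k i * l i) ∧ y = d + ∑ i, (l i : ℚ) • varpI p ν i :=
  nikulinLattice_dual_description_general p ν k
end

section
/- The lattice L = L_p is a sublattice of index p in the Nikulin lattice N = N_p; it contains ϱ, with B(ϱ, ϱ) = −2p(p−1); and L contains no vector x with B(x, x) = −2. -/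
open scoped BigOperators

open Nikulin
open Nikulin Finset

namespace NikAux

variable (p ν : ℕ) (k : Fin ν → ℤ)

lemma Dv_mem (r : Idx p ν) : Dv p ν r ∈ NL p ν k := by
  apply AddSubgroup.subset_closure
  exact Set.mem_union_left _ ⟨r, rfl⟩

lemma varpi_mem : varpi p ν k ∈ NL p ν k := by
  apply AddSubgroup.subset_closure
  exact Set.mem_union_right _ rfl

lemma intcast_mem (y : Idx p ν → ℤ) : (fun q => (y q : ℚ)) ∈ NL p ν k := by
  have hrw : (fun q => (y q : ℚ)) = ∑ r : Idx p ν, y r • Dv p ν r := by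
    funext q
    rw [Finset.sum_apply]
    rw [Finset.sum_eq_single q]
    · simp [Dv]
    · intro r _ hr
      simp [Dv, Pi.single_apply, Ne.symm hr]
    · intro h; exact absurd (Finset.mem_univ q) h
  rw [hrw]
  exact AddSubgroup.sum_mem _ fun r _ => AddSubgroup.zsmul_mem _ (Dv_mem p ν k r) _

lemma mem_NL_of_rep (x : Idx p ν → ℚ) (m : ℤ) (y : Idx p ν → ℤ)
    (h : ∀ q, x q = (y q : ℚ) + (m : ℚ) * varpi p ν k q) : x ∈ NL p ν k := by
  have hx : x = (fun q => (y q : ℚ)) + m • varpi p ν k := by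
    funext q; rw [Pi.add_apply, h q, Pi.smul_apply, zsmul_eq_mul]
  rw [hx]
  exact AddSubgroup.add_mem _ (intcast_mem p ν k y)
    (AddSubgroup.zsmul_mem _ (varpi_mem p ν k) m)

end NikAux
namespace NikAux

variable (p ν : ℕ) (k : Fin ν → ℤ)

def rep : AddSubgroup (Idx p ν → ℚ) where
  carrier := {x | ∃ (m : ℤ) (y : Idx p ν → ℤ), ∀ q, x q = (y q : ℚ) + (m : ℚ) * varpi p ν k q}
  zero_mem' := ⟨0, 0, fun q => by simp⟩
  add_mem' := by
    rintro a b ⟨m, y, h⟩ ⟨m', y', h'⟩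
    exact ⟨m + m', y + y', fun q => by
      rw [Pi.add_apply, h q, h' q, Pi.add_apply]; push_cast; ring⟩
  neg_mem' := by
    rintro a ⟨m, y, h⟩
    exact ⟨-m, -y, fun q => by rw [Pi.neg_apply, h q, Pi.neg_apply]; push_cast; ring⟩

lemma rep_of_mem_NL (x : Idx p ν → ℚ) (hx : x ∈ NL p ν k) :
    ∃ (m : ℤ) (y : Idx p ν → ℤ), ∀ q, x q = (y q : ℚ) + (m : ℚ) * varpi p ν k q := by
  have hle : NL p ν k ≤ rep p ν k := by
    rw [NL, AddSubgroup.closure_le]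
    rintro z (⟨r, rfl⟩ | rfl)
    · exact ⟨0, Pi.single r 1, fun q => by
        simp [Dv, Pi.single_apply, apply_ite (Int.cast : ℤ → ℚ)]⟩
    · exact ⟨1, 0, fun q => by simp⟩
  exact hle hx

end NikAux
set_option linter.unreachableTactic false
set_option linter.unusedTactic false
namespace NikAux
variable (p ν : ℕ)
lemma gram_comm (a b : Idx p ν) : gram p ν a b = gram p ν b a := by
  rcases a with ⟨i,j⟩; rcases b with ⟨i',j'⟩
  simp only [gram]
  split_ifs <;> first
    | rfl
    | (exfalso; simp_all [Fin.ext_iff]; omega)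
    | (exfalso; simp_all [Fin.ext_iff])
    | simp_all [Fin.ext_iff]

lemma gram_cases (i : Fin ν) (j j' : Fin (p-1)) :
    gram p ν (i,j) (i,j')
      = if j = j' then -2 else if j.1+1 = j'.1 ∨ j'.1+1 = j.1 then 1 else 0 := by
  simp [gram]

lemma gram_split (i : Fin ν) (j j0 : Fin (p-1)) (g : Fin (p-1) → ℚ) :
    g j * gram p ν (i,j) (i,j0)
      = (if j = j0 then -2 * g j else 0) + (if j.1+1 = j0.1 then g j else 0)
        + (if j0.1+1 = j.1 then g j else 0) := by
  rw [gram_cases]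
  split_ifs <;> first
    | ring1
    | (exfalso; simp_all only [Fin.ext_iff]; omega)
    | (exfalso; simp_all [Fin.ext_iff])
end NikAux
namespace NikAux

variable (p ν : ℕ) (k : Fin ν → ℤ)

def padF (f : Fin (p-1) → ℚ) (n : ℕ) : ℚ :=
  if h : 1 ≤ n ∧ n ≤ p-1 then f ⟨n-1, by omega⟩ else 0

lemma padF_val (f : Fin (p-1) → ℚ) (j : Fin (p-1)) : padF p f (j.1+1) = f j := by
  have h : 1 ≤ j.1+1 ∧ j.1+1 ≤ p-1 := ⟨by omega, by have := j.2; omega⟩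
  rw [padF, dif_pos h]
  exact congrArg f (Fin.ext (by simp only [Fin.val_mk]; omega))

lemma padF_zero (f : Fin (p-1) → ℚ) : padF p f 0 = 0 := by simp [padF]

lemma padF_p (hp : 1 ≤ p) (f : Fin (p-1) → ℚ) : padF p f p = 0 := by
  rw [padF, dif_neg (by omega)]

lemma gram_ne (a b : Idx p ν) (h : a.1 ≠ b.1) : gram p ν a b = 0 := by
  rw [gram, if_neg h]

lemma sum3 (i0 : Fin ν) (j0 : Fin (p-1)) (g : Fin (p-1) → ℚ) :
    ∑ j : Fin (p-1), g j * gram p ν (i0, j) (i0, j0)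
      = -2 * g j0 + padF p g j0.1 + padF p g (j0.1+2) := by
  rw [Finset.sum_congr rfl (fun j _ => gram_split p ν i0 j j0 g),
    Finset.sum_add_distrib, Finset.sum_add_distrib]
  have e1 : ∑ j : Fin (p-1), (if j = j0 then -2 * g j else 0) = -2 * g j0 := by
    rw [Finset.sum_ite_eq' Finset.univ j0 (fun j => -2 * g j)]
    simp
  have e2 : ∑ j : Fin (p-1), (if j.1+1 = j0.1 then g j else 0) = padF p g j0.1 := by
    by_cases h : 1 ≤ j0.1
    · have hlt : j0.1 - 1 < p - 1 := by have := j0.2; omega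
      rw [Finset.sum_eq_single (⟨j0.1-1, hlt⟩ : Fin (p-1))]
      · rw [if_pos (by simp only [Fin.val_mk]; omega), padF,
          dif_pos ⟨h, by have := j0.2; omega⟩]
      · intro b _ hb
        apply if_neg
        intro hc; exact hb (Fin.ext (by simp only [Fin.val_mk]; omega))
      · intro hmem; exact absurd (Finset.mem_univ _) hmem
    · rw [padF, dif_neg (by omega)]
      apply Finset.sum_eq_zero
      intro b _; exact if_neg (by omega)
  have e3 : ∑ j : Fin (p-1), (if j0.1+1 = j.1 then g j else 0) = padF p g (j0.1+2) := by
    by_cases h : j0.1 + 2 ≤ p-1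
    · rw [Finset.sum_eq_single (⟨j0.1+1, by omega⟩ : Fin (p-1))]
      · rw [if_pos rfl, padF, dif_pos ⟨by omega, h⟩]
        exact congrArg g (Fin.ext (by simp only [Fin.val_mk]; omega))
      · intro b _ hb
        apply if_neg
        intro hc; exact hb (Fin.ext (by simp only [Fin.val_mk]; omega))
      · intro hmem; exact absurd (Finset.mem_univ _) hmem
    · rw [padF, dif_neg (by omega)]
      apply Finset.sum_eq_zero
      intro b _; exact if_neg (by have := b.2; omega)
  rw [e1, e2, e3]

lemma Bf_apply (x y : Idx p ν → ℚ) :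
    Bf p ν x y = ∑ a : Idx p ν, ∑ b : Idx p ν, x a * gram p ν a b * y b := rfl

lemma colsum (b : Idx p ν) : ∑ a : Idx p ν, rho p ν a * gram p ν a b = 1 := by
  obtain ⟨i0, j0⟩ := b
  rw [Fintype.sum_prod_type]
  rw [Finset.sum_eq_single i0]
  · rw [sum3]
    have hv : ∀ n : ℕ, n ≤ p → padF p (fun j => rho p ν (i0, j)) n
        = -((n:ℚ) * ((p:ℚ) - (n:ℚ)))/2 := by
      intro n hn
      by_cases h : 1 ≤ n ∧ n ≤ p - 1
      · rw [padF, dif_pos h]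
        show -((((n-1 : ℕ):ℚ) + 1) * ((p:ℚ) - (((n-1:ℕ):ℚ) + 1)) / 2) = _
        rw [Nat.cast_sub h.1]
        push_cast
        ring
      · rw [padF, dif_neg h]
        have h2 : n = 0 ∨ n = p := by omega
        rcases h2 with rfl | rfl
        · norm_num
        · ring_nf
    rw [hv j0.1 (by have := j0.2; omega), hv (j0.1+2) (by have := j0.2; omega)]
    show -2 * -((((j0.1:ℕ):ℚ) + 1) * ((p:ℚ) - (((j0.1:ℕ):ℚ) + 1)) / 2) + _ + _ = 1
    push_cast
    ring
  · intro i _ hi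
    apply Finset.sum_eq_zero; intro j _
    rw [gram_ne p ν _ _ (by simpa using hi), mul_zero]
  · intro hmem; exact absurd (Finset.mem_univ _) hmem

lemma Bf_rho (x : Idx p ν → ℚ) : Bf p ν (rho p ν) x = ∑ q : Idx p ν, x q := by
  rw [Bf_apply, Finset.sum_comm]
  refine Finset.sum_congr rfl fun b _ => ?_
  rw [← Finset.sum_mul, colsum, one_mul]

end NikAux
namespace NikAux

variable (p ν : ℕ) (k : Fin ν → ℤ)

lemma block_id (hp : 2 ≤ p) (P : ℕ → ℚ) (h0 : P 0 = 0) (hpp : P p = 0) :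
    ∑ n ∈ Finset.range (p-1), P (n+1) * (-2 * P (n+1) + P n + P (n+2))
      = -∑ t ∈ Finset.range p, (P (t+1) - P t)^2 := by
  have key : ∀ n, P (n+1) * (-2 * P (n+1) + P n + P (n+2))
      = ((P n^2 - P n * P (n+1)) - (P (n+1)^2 - P (n+1) * P (n+2)))
        - (P (n+1) - P n)^2 := fun n => by ring
  have h1 : ∑ n ∈ Finset.range (p-1), P (n+1) * (-2 * P (n+1) + P n + P (n+2))
      = (∑ n ∈ Finset.range (p-1),
          ((P n^2 - P n * P (n+1)) - (P (n+1)^2 - P (n+1) * P (n+2))))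
        - ∑ n ∈ Finset.range (p-1), (P (n+1) - P n)^2 := by
    rw [← Finset.sum_sub_distrib]
    exact Finset.sum_congr rfl fun n _ => key n
  rw [h1, Finset.sum_range_sub' (fun n => P n^2 - P n * P (n+1))]
  have h2 : ∑ t ∈ Finset.range p, (P (t+1) - P t)^2
      = ∑ t ∈ Finset.range (p-1), (P (t+1) - P t)^2 + (P ((p-1)+1) - P (p-1))^2 := by
    rw [← Finset.sum_range_succ, show (p-1)+1 = p from by omega]
  rw [h2]
  have h3 : (p-1)+1 = p := by omega
  rw [h3, hpp, h0]
  ring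

lemma norm_eq (hp : 2 ≤ p) (x : Idx p ν → ℚ) :
    Bf p ν x x = -∑ i : Fin ν, ∑ t ∈ Finset.range p,
      (padF p (fun j => x (i,j)) (t+1) - padF p (fun j => x (i,j)) t)^2 := by
  rw [Bf_apply, Fintype.sum_prod_type]
  rw [show -∑ i : Fin ν, ∑ t ∈ Finset.range p,
      (padF p (fun j => x (i,j)) (t+1) - padF p (fun j => x (i,j)) t)^2
    = ∑ i : Fin ν, -∑ t ∈ Finset.range p,
      (padF p (fun j => x (i,j)) (t+1) - padF p (fun j => x (i,j)) t)^2 by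
      rw [← Finset.sum_neg_distrib]]
  refine Finset.sum_congr rfl fun i _ => ?_
  have hkey : ∀ j : Fin (p-1), ∑ b : Idx p ν, x (i,j) * gram p ν (i,j) b * x b
      = padF p (fun j' => x (i,j')) (j.1+1) * (-2 * padF p (fun j' => x (i,j')) (j.1+1)
        + padF p (fun j' => x (i,j')) j.1 + padF p (fun j' => x (i,j')) (j.1+2)) := by
    intro j
    rw [Fintype.sum_prod_type]
    rw [Finset.sum_eq_single i]
    · have : ∀ j' : Fin (p-1), x (i,j) * gram p ν (i,j) (i,j') * x (i,j')
          = x (i,j) * (x (i,j') * gram p ν (i,j') (i,j)) := by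
        intro j'; rw [gram_comm]; ring
      rw [Finset.sum_congr rfl fun j' _ => this j', ← Finset.mul_sum, sum3]
      rw [padF_val]
    · intro i' _ hi'
      apply Finset.sum_eq_zero; intro j' _
      rw [gram_ne p ν _ _ (by simpa using (Ne.symm hi')), mul_zero, zero_mul]
    · intro hmem; exact absurd (Finset.mem_univ _) hmem
  rw [Finset.sum_congr rfl fun j _ => hkey j]
  rw [Fin.sum_univ_eq_sum_range (fun n => padF p (fun j' => x (i,j')) (n+1)
    * (-2 * padF p (fun j' => x (i,j')) (n+1) + padF p (fun j' => x (i,j')) n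
      + padF p (fun j' => x (i,j')) (n+2)))]
  exact block_id p hp _ (padF_zero p _) (padF_p p (by omega) _)

end NikAux
namespace NikAux

variable (p ν : ℕ) (k : Fin ν → ℤ)

def Ypad (y : Idx p ν → ℤ) (i : Fin ν) (n : ℕ) : ℤ :=
  if h : 1 ≤ n ∧ n ≤ p-1 then y (i, ⟨n-1, by omega⟩) else 0

def uu (y : Idx p ν → ℤ) (c : ℤ) (i : Fin ν) (t : ℕ) : ℤ :=
  p * (Ypad p ν y i (t+1) - Ypad p ν y i t) + c * (if t + 1 = p then 1 - (p:ℤ) else 1)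

lemma pad_link (hp : 2 ≤ p) (x : Idx p ν → ℚ) (y : Idx p ν → ℤ) (m : ℤ)
    (hx : ∀ q, x q = (y q : ℚ) + (m : ℚ) * varpi p ν k q) (i : Fin ν) (n : ℕ)
    (hn : n ≤ p-1) :
    padF p (fun j => x (i,j)) n = (Ypad p ν y i n : ℚ) + ((m * k i : ℤ) : ℚ) * n / p := by
  by_cases h : 1 ≤ n ∧ n ≤ p-1
  · rw [padF, dif_pos h, Ypad, dif_pos h, hx]
    simp only [varpi]
    have hcast : ((n-1 : ℕ):ℚ) = (n:ℚ) - 1 := by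
      rw [Nat.cast_sub h.1, Nat.cast_one]
    simp only [Fin.val_mk, hcast]
    push_cast
    ring
  · have hn0 : n = 0 := by omega
    subst hn0
    rw [padF, dif_neg h, Ypad, dif_neg h]
    norm_num

lemma uu_spec (hp : 2 ≤ p) (x : Idx p ν → ℚ) (y : Idx p ν → ℤ) (m : ℤ)
    (hx : ∀ q, x q = (y q : ℚ) + (m : ℚ) * varpi p ν k q) (i : Fin ν) (t : ℕ)
    (ht : t < p) :
    ((uu p ν y (m * k i) i t : ℤ) : ℚ)
      = p * (padF p (fun j => x (i,j)) (t+1) - padF p (fun j => x (i,j)) t) := by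
  have hpne : (p:ℚ) ≠ 0 := Nat.cast_ne_zero.2 (by omega)
  by_cases hcase : t + 1 = p
  · rw [show t + 1 = p from hcase, padF_p p (by omega),
      pad_link p ν k hp x y m hx i t (by omega)]
    rw [uu, if_pos hcase]
    have hYp : Ypad p ν y i (t+1) = 0 := by rw [Ypad, dif_neg (by omega)]
    rw [hYp]
    have htq : (t:ℚ) + 1 = (p:ℚ) := by exact_mod_cast hcase
    push_cast
    field_simp
    rw [show (t:ℚ) = (p:ℚ) - 1 from by linarith]
    ring
  · rw [pad_link p ν k hp x y m hx i (t+1) (by omega),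
      pad_link p ν k hp x y m hx i t (by omega), uu, if_neg hcase]
    push_cast
    field_simp
    ring

lemma uu_sub (y : Idx p ν → ℤ) (c : ℤ) (i : Fin ν) (t : ℕ) :
    (p:ℤ) ∣ uu p ν y c i t - c := by
  rw [uu]
  split_ifs with h
  · exact ⟨(Ypad p ν y i (t+1) - Ypad p ν y i t) - c, by ring⟩
  · exact ⟨(Ypad p ν y i (t+1) - Ypad p ν y i t), by ring⟩

lemma uu_sum (hp : 2 ≤ p) (y : Idx p ν → ℤ) (c : ℤ) (i : Fin ν) :
    ∑ t ∈ Finset.range p, uu p ν y c i t = 0 := by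
  have h1 : ∑ t ∈ Finset.range p, ((p:ℤ) * (Ypad p ν y i (t+1) - Ypad p ν y i t)) = 0 := by
    rw [← Finset.mul_sum, Finset.sum_range_sub (fun n => Ypad p ν y i n)]
    rw [show Ypad p ν y i p = 0 from by rw [Ypad, dif_neg (by omega)],
        show Ypad p ν y i 0 = 0 from by rw [Ypad, dif_neg (by omega)]]
    ring
  have h2 : ∑ t ∈ Finset.range p, (if t+1 = p then 1-(p:ℤ) else 1) = 0 := by
    rw [show p = (p-1)+1 from by omega]
    rw [Finset.sum_range_succ]
    rw [Finset.sum_congr rfl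
      (fun t ht => if_neg (by simp only [Finset.mem_range] at ht; omega))]
    rw [if_pos rfl]
    simp only [Finset.sum_const, Finset.card_range, nsmul_eq_mul, mul_one]
    push_cast
    ring
  calc ∑ t ∈ Finset.range p, uu p ν y c i t
      = ∑ t ∈ Finset.range p, (((p:ℤ) * (Ypad p ν y i (t+1) - Ypad p ν y i t))
        + c * (if t+1 = p then 1-(p:ℤ) else 1)) := Finset.sum_congr rfl fun t _ => rfl
    _ = 0 := by
        rw [Finset.sum_add_distrib, h1, ← Finset.mul_sum, h2]
        ring

lemma int_sq_ne_two (n : ℤ) : n * n ≠ 2 := by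
  intro h
  have h1 : n ≤ 1 := by nlinarith
  have h2 : -1 ≤ n := by nlinarith
  interval_cases n <;> norm_num at h

lemma int_abs_le_sq (w : ℤ) : |w| ≤ w * w := by
  rcases abs_cases w with ⟨h1,h2⟩ | ⟨h1,h2⟩ <;> nlinarith

lemma class2 {γ : Type*} [DecidableEq γ] (F : Finset γ) (v : γ → ℤ)
    (h : ∑ q ∈ F, v q * v q = 2) :
    ∃ a b, a ∈ F ∧ b ∈ F ∧ a ≠ b ∧ v a * v a = 1 ∧ v b * v b = 1 ∧
      ∀ c ∈ F, c ≠ a → c ≠ b → v c = 0 := by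
  classical
  set S := F.filter (fun q => v q ≠ 0) with hSdef
  have hsub : S ⊆ F := Finset.filter_subset _ _
  have hsum : ∑ q ∈ S, v q * v q = 2 := by
    rw [hSdef, Finset.sum_filter_of_ne (by intro q hq hne h0; exact hne (by rw [h0]; ring))]
    exact h
  have hone : ∀ q ∈ S, 1 ≤ v q * v q := by
    intro q hq
    have hq0 : v q ≠ 0 := (Finset.mem_filter.1 hq).2
    rcases hq0.lt_or_gt with hlt | hlt <;> nlinarith
  have hle : S.card ≤ 2 := by
    by_contra hgt
    push_neg at hgt
    have hcs : (S.card : ℤ) = ∑ q ∈ S, (1:ℤ) := by simp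
    have hss : ∑ q ∈ S, (1:ℤ) ≤ ∑ q ∈ S, v q * v q := Finset.sum_le_sum hone
    rw [hsum, ← hcs] at hss
    omega
  have hnot0 : S.card ≠ 0 := by
    intro h0
    rw [Finset.card_eq_zero] at h0
    rw [h0, Finset.sum_empty] at hsum
    exact absurd hsum (by norm_num)
  have hnot1 : S.card ≠ 1 := by
    intro h1
    obtain ⟨a, ha⟩ := Finset.card_eq_one.1 h1
    rw [ha, Finset.sum_singleton] at hsum
    exact int_sq_ne_two _ hsum
  have hc2 : S.card = 2 := by omega
  obtain ⟨a, b, hab, hS2⟩ := Finset.card_eq_two.1 hc2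
  have haS : a ∈ S := by rw [hS2]; simp
  have hbS : b ∈ S := by rw [hS2]; simp
  rw [hS2, Finset.sum_pair hab] at hsum
  have ha1 : 1 ≤ v a * v a := hone a haS
  have hb1 : 1 ≤ v b * v b := hone b hbS
  refine ⟨a, b, hsub haS, hsub hbS, hab, by linarith, by linarith, ?_⟩
  intro c hcF hca hcb
  by_contra hc0
  have hcS : c ∈ S := Finset.mem_filter.2 ⟨hcF, hc0⟩
  rw [hS2, Finset.mem_insert, Finset.mem_singleton] at hcS
  tauto

end NikAux
set_option linter.unreachableTactic false
set_option linter.unusedTactic false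
namespace NikAux

variable (p ν : ℕ) (k : Fin ν → ℤ)

lemma count_sum (N s : ℕ) (e : ℤ) :
    ∑ n ∈ Finset.range N, (if s < n+1 then e else 0) = ((N - s : ℕ):ℤ) * e := by
  induction N with
  | zero => simp
  | succ N ih =>
    rw [Finset.sum_range_succ, ih]
    by_cases h : s < N+1
    · rw [if_pos h, show ((N+1-s:ℕ):ℤ) = ((N-s:ℕ):ℤ) + 1 from by omega]
      ring
    · rw [if_neg h, show ((N+1-s:ℕ):ℤ) = ((N-s:ℕ):ℤ) from by omega]
      ring

lemma no_minus_two (hp : 2 ≤ p) (hPrime : p.Prime)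
    (hkb : ∀ i, 0 < k i ∧ k i < (p:ℤ))
    (hineq : 2*(p:ℤ)*(p:ℤ) < (ν:ℤ) * ((p:ℤ)*((p:ℤ)-1))) :
    ∀ x ∈ LL p ν k, Bf p ν x x ≠ -2 := by
  intro x hxL hB2
  obtain ⟨hxN, n0, hn0⟩ := hxL
  obtain ⟨m, y, hx⟩ := rep_of_mem_NL p ν k x hxN
  have hpzQ : (p:ℚ) ≠ 0 := Nat.cast_ne_zero.2 (by omega)
  have hpzZ : (p:ℤ) ≠ 0 := Int.natCast_ne_zero.2 (by omega)
  -- norm identity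
  have hnorm : ∑ i : Fin ν, ∑ t ∈ Finset.range p,
      (padF p (fun j => x (i,j)) (t+1) - padF p (fun j => x (i,j)) t)^2 = 2 := by
    have h := norm_eq p ν hp x
    rw [hB2] at h
    linarith
  -- integer square sum
  have hsq : ∑ i : Fin ν, ∑ t ∈ Finset.range p,
      uu p ν y (m * k i) i t * uu p ν y (m * k i) i t = 2*(p:ℤ)*(p:ℤ) := by
    have hq : ((∑ i : Fin ν, ∑ t ∈ Finset.range p,
        uu p ν y (m * k i) i t * uu p ν y (m * k i) i t : ℤ) : ℚ)
        = ((2*(p:ℤ)*(p:ℤ) : ℤ) : ℚ) := by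
      push_cast
      have hterm : ∀ i : Fin ν, ∀ t ∈ Finset.range p,
          ((uu p ν y (m * k i) i t : ℤ):ℚ) * ((uu p ν y (m * k i) i t : ℤ):ℚ)
          = (p:ℚ)^2 * (padF p (fun j => x (i,j)) (t+1) - padF p (fun j => x (i,j)) t)^2 := by
        intro i t ht
        rw [uu_spec p ν k hp x y m hx i t (Finset.mem_range.1 ht)]
        ring
      calc ∑ i : Fin ν, ∑ t ∈ Finset.range p,
            ((uu p ν y (m * k i) i t : ℤ):ℚ) * ((uu p ν y (m * k i) i t : ℤ):ℚ)
          = ∑ i : Fin ν, ∑ t ∈ Finset.range p, (p:ℚ)^2 *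
            (padF p (fun j => x (i,j)) (t+1) - padF p (fun j => x (i,j)) t)^2 :=
            Finset.sum_congr rfl fun i _ => Finset.sum_congr rfl (hterm i)
        _ = (p:ℚ)^2 * ∑ i : Fin ν, ∑ t ∈ Finset.range p,
            (padF p (fun j => x (i,j)) (t+1) - padF p (fun j => x (i,j)) t)^2 := by
            rw [Finset.mul_sum]
            exact Finset.sum_congr rfl fun i _ => (Finset.mul_sum _ _ _).symm
        _ = 2*(p:ℚ)*(p:ℚ) := by rw [hnorm]; ring
    exact_mod_cast hq
  by_cases hm : (p:ℤ) ∣ m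
  · -- Case B : p ∣ m
    have hdc : ∀ i : Fin ν, (p:ℤ) ∣ m * k i := fun i => Dvd.dvd.mul_right hm (k i)
    have hdu : ∀ (i : Fin ν) (t : ℕ), (p:ℤ) ∣ uu p ν y (m * k i) i t := by
      intro i t
      have h := dvd_add (uu_sub p ν y (m * k i) i t) (hdc i)
      simpa using h
    set v : Fin ν → ℕ → ℤ := fun i t => uu p ν y (m * k i) i t / p with hv
    have huv : ∀ (i : Fin ν) (t : ℕ), uu p ν y (m * k i) i t = p * v i t :=
      fun i t => (Int.mul_ediv_cancel' (hdu i t)).symm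
    have hsumv2 : ∑ i : Fin ν, ∑ t ∈ Finset.range p, v i t * v i t = 2 := by
      have h2 : (p:ℤ)^2 * (∑ i : Fin ν, ∑ t ∈ Finset.range p, v i t * v i t)
          = (p:ℤ)^2 * 2 := by
        calc (p:ℤ)^2 * (∑ i : Fin ν, ∑ t ∈ Finset.range p, v i t * v i t)
            = ∑ i : Fin ν, ∑ t ∈ Finset.range p, (p:ℤ)^2 * (v i t * v i t) := by
              rw [Finset.mul_sum]
              exact Finset.sum_congr rfl fun i _ => (Finset.mul_sum _ _ _)
          _ = ∑ i : Fin ν, ∑ t ∈ Finset.range p,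
              uu p ν y (m * k i) i t * uu p ν y (m * k i) i t :=
              Finset.sum_congr rfl fun i _ => Finset.sum_congr rfl fun t _ => by
                rw [huv i t]; ring
          _ = 2*(p:ℤ)*(p:ℤ) := hsq
          _ = (p:ℤ)^2 * 2 := by ring
      exact mul_left_cancel₀ (pow_ne_zero 2 hpzZ) h2
    have hsumvt : ∀ i : Fin ν, ∑ t ∈ Finset.range p, v i t = 0 := by
      intro i
      have h0 := uu_sum p ν hp y (m * k i) i
      rw [Finset.sum_congr rfl (fun t _ => huv i t), ← Finset.mul_sum] at h0
      exact (mul_eq_zero.1 h0).resolve_left hpzZ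
    have hFsum : ∑ q ∈ (Finset.univ ×ˢ Finset.range p),
        (fun q : Fin ν × ℕ => v q.1 q.2) q * (fun q : Fin ν × ℕ => v q.1 q.2) q = 2 := by
      rw [Finset.sum_product]
      exact hsumv2
    obtain ⟨a, b, haF, hbF, hab, ha1, hb1, hrest⟩ := class2 _ _ hFsum
    obtain ⟨i1, t1⟩ := a
    obtain ⟨i2, t2⟩ := b
    simp only [] at ha1 hb1
    have ht1p : t1 < p := Finset.mem_range.1 (Finset.mem_product.1 haF).2
    have ht2p : t2 < p := Finset.mem_range.1 (Finset.mem_product.1 hbF).2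
    have hi12 : i1 = i2 := by
      by_contra hne
      have hsng : ∑ t ∈ Finset.range p, v i1 t = v i1 t1 := by
        rw [Finset.sum_eq_single t1]
        · intro t htm htne
          exact hrest (i1, t)
            (Finset.mem_product.2 ⟨Finset.mem_univ _, htm⟩)
            (fun hce => htne (congrArg Prod.snd hce))
            (fun hce => hne (congrArg Prod.fst hce))
        · intro hnm; exact absurd (Finset.mem_range.2 ht1p) hnm
      have hva0 : v i1 t1 = 0 := hsng.symm.trans (hsumvt i1)
      rw [hva0] at ha1
      norm_num at ha1
    subst hi12
    have ht12 : t1 ≠ t2 := fun h => hab (by rw [h])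
    have hptw : ∀ t, t < p → v i1 t
        = (if t = t1 then v i1 t1 else 0) + (if t = t2 then v i1 t2 else 0) := by
      intro t htp'
      by_cases h1 : t = t1
      · subst h1; rw [if_pos rfl, if_neg ht12]; ring
      · by_cases h2 : t = t2
        · subst h2; rw [if_neg h1, if_pos rfl]; ring
        · rw [if_neg h1, if_neg h2]
          have h := hrest (i1, t)
            (Finset.mem_product.2 ⟨Finset.mem_univ _, Finset.mem_range.2 htp'⟩)
            (fun hce => h1 (congrArg Prod.snd hce))
            (fun hce => h2 (congrArg Prod.snd hce))
          simpa using h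
    have hvsum : v i1 t1 + v i1 t2 = 0 := by
      have hst : ∑ t ∈ Finset.range p, v i1 t = v i1 t1 + v i1 t2 := by
        rw [Finset.sum_congr rfl (fun t htm => hptw t (Finset.mem_range.1 htm)),
          Finset.sum_add_distrib,
          Finset.sum_ite_eq' (Finset.range p) t1 (fun _ => v i1 t1),
          Finset.sum_ite_eq' (Finset.range p) t2 (fun _ => v i1 t2),
          if_pos (Finset.mem_range.2 ht1p), if_pos (Finset.mem_range.2 ht2p)]
      have h0 := hsumvt i1
      omega
    -- Σ_q x q as integer
    have hPz : ∀ (i : Fin ν) (n : ℕ), n ≤ p → padF p (fun j => x (i,j)) n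
        = ∑ t ∈ Finset.range n, ((v i t : ℤ):ℚ) := by
      intro i n hn
      have htel : padF p (fun j => x (i,j)) n
          = ∑ t ∈ Finset.range n, (padF p (fun j => x (i,j)) (t+1)
            - padF p (fun j => x (i,j)) t) := by
        rw [Finset.sum_range_sub (fun n => padF p (fun j => x (i,j)) n), padF_zero, sub_zero]
      rw [htel]
      refine Finset.sum_congr rfl fun t htm => ?_
      have htp' : t < p := lt_of_lt_of_le (Finset.mem_range.1 htm) hn
      have hu := uu_spec p ν k hp x y m hx i t htp'
      rw [huv i t] at hu
      push_cast at hu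
      have := mul_left_cancel₀ hpzQ hu
      exact this.symm
    have hxsum : ∑ q : Idx p ν, x q
        = ((∑ i : Fin ν, ∑ n ∈ Finset.range (p-1), ∑ t ∈ Finset.range (n+1), v i t : ℤ) : ℚ) := by
      push_cast
      rw [Fintype.sum_prod_type]
      refine Finset.sum_congr rfl fun i _ => ?_
      rw [Finset.sum_congr rfl (fun j (_ : j ∈ Finset.univ) =>
        (padF_val p (fun j => x (i,j)) j).symm)]
      rw [Fin.sum_univ_eq_sum_range (fun n => padF p (fun j => x (i,j)) (n+1))]
      refine Finset.sum_congr rfl fun n hn => ?_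
      have hn' : n + 1 ≤ p := by
        have := Finset.mem_range.1 hn; omega
      rw [hPz i (n+1) hn']
      try push_cast
      try rfl
    have hA : (∑ i : Fin ν, ∑ n ∈ Finset.range (p-1), ∑ t ∈ Finset.range (n+1), v i t)
        = p * n0 := by
      have hq : ((∑ i : Fin ν, ∑ n ∈ Finset.range (p-1), ∑ t ∈ Finset.range (n+1), v i t : ℤ):ℚ)
          = ((p * n0 : ℤ) : ℚ) := by
        rw [← hxsum, ← Bf_rho p ν x]
        push_cast
        exact hn0
      exact_mod_cast hq
    have hAval : (∑ i : Fin ν, ∑ n ∈ Finset.range (p-1), ∑ t ∈ Finset.range (n+1), v i t)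
        = ((p-1-t1:ℕ):ℤ) * v i1 t1 + ((p-1-t2:ℕ):ℤ) * v i1 t2 := by
      rw [Finset.sum_eq_single i1]
      · have hinner : ∀ n ∈ Finset.range (p-1), ∑ t ∈ Finset.range (n+1), v i1 t
            = (if t1 < n+1 then v i1 t1 else 0) + (if t2 < n+1 then v i1 t2 else 0) := by
          intro n hnm
          have hnp : n + 1 ≤ p := by have := Finset.mem_range.1 hnm; omega
          rw [Finset.sum_congr rfl (fun t htm => hptw t
            (lt_of_lt_of_le (Finset.mem_range.1 htm) hnp)),
            Finset.sum_add_distrib,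
            Finset.sum_ite_eq' (Finset.range (n+1)) t1 (fun _ => v i1 t1),
            Finset.sum_ite_eq' (Finset.range (n+1)) t2 (fun _ => v i1 t2)]
          simp [Finset.mem_range]
        rw [Finset.sum_congr rfl hinner, Finset.sum_add_distrib,
          count_sum (p-1) t1 (v i1 t1), count_sum (p-1) t2 (v i1 t2)]
      · intro i _ hi
        apply Finset.sum_eq_zero; intro n hn
        apply Finset.sum_eq_zero; intro t ht
        have hnp : n + 1 ≤ p := by have := Finset.mem_range.1 hn; omega
        exact hrest (i, t)
          (Finset.mem_product.2 ⟨Finset.mem_univ _,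
            Finset.mem_range.2 (lt_of_lt_of_le (Finset.mem_range.1 ht) hnp)⟩)
          (fun hce => hi (congrArg Prod.fst hce))
          (fun hce => hi (congrArg Prod.fst hce))
      · intro h; exact absurd (Finset.mem_univ _) h
    have hvb : v i1 t2 = - v i1 t1 := by omega
    have hε : v i1 t1 = 1 ∨ v i1 t1 = -1 := by
      rcases Int.eq_one_or_neg_one_of_mul_eq_one' ha1 with ⟨h1, _⟩ | ⟨h1, _⟩
      · exact Or.inl h1
      · exact Or.inr h1
    have hcomb : ((p-1-t1:ℕ):ℤ) * v i1 t1 + ((p-1-t2:ℕ):ℤ) * v i1 t2 = p * n0 := by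
      rw [← hAval]; exact hA
    have hdvdD : (p:ℤ) ∣ (((p-1-t1:ℕ):ℤ) - ((p-1-t2:ℕ):ℤ)) := by
      rcases hε with h1 | h1
      · refine ⟨n0, ?_⟩
        rw [hvb, h1] at hcomb
        linarith
      · refine ⟨-n0, ?_⟩
        rw [hvb, h1] at hcomb
        have : -(((p-1-t1:ℕ):ℤ)) + ((p-1-t2:ℕ):ℤ) = (p:ℤ) * n0 := by linarith
        linarith [this]
    have hD0 : (((p-1-t1:ℕ):ℤ) - ((p-1-t2:ℕ):ℤ)) ≠ 0 := by omega
    have hple := Int.le_of_dvd (abs_pos.2 hD0) ((dvd_abs _ _).2 hdvdD)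
    rcases abs_cases ((((p-1-t1:ℕ):ℤ) - ((p-1-t2:ℕ):ℤ))) with ⟨he, _⟩ | ⟨he, _⟩ <;> omega
  · -- Case A : p ∤ m
    have hblock : ∀ i : Fin ν, (p:ℤ) * ((p:ℤ) - 1)
        ≤ ∑ t ∈ Finset.range p, uu p ν y (m * k i) i t * uu p ν y (m * k i) i t := by
      intro i
      have hpc : ¬ (p:ℤ) ∣ m * k i := by
        intro hdvd
        rcases (Nat.prime_iff_prime_int.1 hPrime).2.2 m (k i) hdvd with h | h
        · exact hm h
        · have hk1 := hkb i
          have := Int.le_of_dvd hk1.1 h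
          omega
      set s : ℤ := (m * k i) % p with hs
      have hs0 : 0 ≤ s := Int.emod_nonneg _ hpzZ
      have hsp : s < p := Int.emod_lt_of_pos _ (by omega)
      have hsne : s ≠ 0 := fun h0 => hpc (Int.dvd_of_emod_eq_zero h0)
      have hdcs : (p:ℤ) ∣ m * k i - s := ⟨(m * k i) / p, by rw [hs, Int.emod_def]; ring⟩
      have hdus : ∀ t, (p:ℤ) ∣ uu p ν y (m * k i) i t - s := by
        intro t
        have h := dvd_add (uu_sub p ν y (m * k i) i t) hdcs
        have he : (uu p ν y (m * k i) i t - m * k i) + (m * k i - s)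
            = uu p ν y (m * k i) i t - s := by ring
        rwa [he] at h
      set w : ℕ → ℤ := fun t => (uu p ν y (m * k i) i t - s) / p with hw
      have huw : ∀ t, uu p ν y (m * k i) i t = p * w t + s := by
        intro t
        have h : (p:ℤ) * w t = uu p ν y (m * k i) i t - s := Int.mul_ediv_cancel' (hdus t)
        omega
      have hsumw : ∑ t ∈ Finset.range p, w t = -s := by
        have h0 := uu_sum p ν hp y (m * k i) i
        rw [Finset.sum_congr rfl (fun t _ => huw t), Finset.sum_add_distrib,
          Finset.sum_const, Finset.card_range, ← Finset.mul_sum, nsmul_eq_mul] at h0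
        have h1 : (p:ℤ) * ((∑ t ∈ Finset.range p, w t) + s) = 0 := by linarith
        have h2 := (mul_eq_zero.1 h1).resolve_left hpzZ
        linarith
      have hwsq : s ≤ ∑ t ∈ Finset.range p, w t * w t := by
        calc s = |∑ t ∈ Finset.range p, w t| := by
              rw [hsumw, abs_neg, abs_of_nonneg hs0]
          _ ≤ ∑ t ∈ Finset.range p, |w t| := Finset.abs_sum_le_sum_abs _ _
          _ ≤ ∑ t ∈ Finset.range p, w t * w t :=
              Finset.sum_le_sum fun t _ => int_abs_le_sq (w t)
      have hexp : ∑ t ∈ Finset.range p, uu p ν y (m * k i) i t * uu p ν y (m * k i) i t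
          = (p:ℤ)^2 * (∑ t ∈ Finset.range p, w t * w t)
            + 2*(p:ℤ)*s*(∑ t ∈ Finset.range p, w t) + (p:ℤ) * s^2 := by
        rw [Finset.sum_congr rfl (fun t (_ : t ∈ Finset.range p) => by
          rw [huw t]
          ring
          : ∀ t ∈ Finset.range p, uu p ν y (m * k i) i t * uu p ν y (m * k i) i t
            = (p:ℤ)^2 * (w t * w t) + 2*(p:ℤ)*s*(w t) + s^2)]
        rw [Finset.sum_add_distrib, Finset.sum_add_distrib, ← Finset.mul_sum, ← Finset.mul_sum,
          Finset.sum_const, Finset.card_range, nsmul_eq_mul]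
        try ring
      rw [hexp, hsumw]
      have h1 : 1 ≤ s := by omega
      have hp2 : (2:ℤ) ≤ (p:ℤ) := by exact_mod_cast hp
      have key1 : (p:ℤ)^2 * s ≤ (p:ℤ)^2 * (∑ t ∈ Finset.range p, w t * w t) :=
        mul_le_mul_of_nonneg_left hwsq (by positivity)
      have key2 : (0:ℤ) ≤ (p:ℤ) * ((s-1) * ((p:ℤ)-1-s)) :=
        mul_nonneg (by linarith) (mul_nonneg (by linarith) (by omega))
      nlinarith [key1, key2]
    have htot : (ν:ℤ) * ((p:ℤ) * ((p:ℤ)-1)) ≤ 2*(p:ℤ)*(p:ℤ) := by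
      calc (ν:ℤ) * ((p:ℤ) * ((p:ℤ)-1))
          = ∑ _i : Fin ν, ((p:ℤ) * ((p:ℤ)-1)) := by
            rw [Finset.sum_const, Finset.card_univ, Fintype.card_fin, nsmul_eq_mul]
        _ ≤ ∑ i : Fin ν, ∑ t ∈ Finset.range p,
            uu p ν y (m * k i) i t * uu p ν y (m * k i) i t :=
            Finset.sum_le_sum fun i _ => hblock i
        _ = 2*(p:ℤ)*(p:ℤ) := hsq
    linarith

end NikAux
namespace NikAux

variable (p ν : ℕ) (k : Fin ν → ℤ)

lemma sum_int_of_mem (hW : ∃ W : ℤ, (W:ℚ) = ∑ q : Idx p ν, varpi p ν k q) :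
    ∀ x ∈ NL p ν k, ∃ n : ℤ, ∑ q : Idx p ν, x q = (n:ℚ) := by
  obtain ⟨W, hWe⟩ := hW
  intro x hx
  obtain ⟨m, y, h⟩ := rep_of_mem_NL p ν k x hx
  refine ⟨(∑ q : Idx p ν, y q) + m * W, ?_⟩
  rw [Finset.sum_congr rfl (fun q (_ : q ∈ Finset.univ) => h q), Finset.sum_add_distrib,
    ← Finset.mul_sum, ← hWe]
  push_cast
  ring

lemma index_eq (hp : 2 ≤ p) (q0 : Idx p ν)
    (hW : ∃ W : ℤ, (W:ℚ) = ∑ q : Idx p ν, varpi p ν k q) :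
    Nat.card (↥(NL p ν k) ⧸ ((LL p ν k).addSubgroupOf (NL p ν k))) = p := by
  haveI : NeZero p := ⟨by omega⟩
  have hint := sum_int_of_mem p ν k hW
  have hspec : ∀ x : ↥(NL p ν k),
      (((∑ q : Idx p ν, (x : Idx p ν → ℚ) q).num : ℤ) : ℚ)
        = ∑ q : Idx p ν, (x : Idx p ν → ℚ) q := by
    intro x
    obtain ⟨n, hn⟩ := hint x.1 x.2
    rw [hn, Rat.num_intCast]
  let g : ↥(NL p ν k) →+ ℤ :=
  { toFun := fun x => (∑ q : Idx p ν, (x : Idx p ν → ℚ) q).num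
    map_zero' := by simp
    map_add' := by
      intro a b
      obtain ⟨na, hna⟩ := hint a.1 a.2
      obtain ⟨nb, hnb⟩ := hint b.1 b.2
      have hab : ∑ q : Idx p ν, ((a + b : ↥(NL p ν k)) : Idx p ν → ℚ) q
          = ((na + nb : ℤ):ℚ) := by
        have hco : ((a + b : ↥(NL p ν k)) : Idx p ν → ℚ)
            = (a : Idx p ν → ℚ) + (b : Idx p ν → ℚ) := rfl
        rw [hco]
        rw [show ∑ q : Idx p ν, ((a : Idx p ν → ℚ) + (b : Idx p ν → ℚ)) q
          = ∑ q : Idx p ν, ((a : Idx p ν → ℚ) q + (b : Idx p ν → ℚ) q) from rfl]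
        rw [Finset.sum_add_distrib, hna, hnb]
        push_cast
        ring
      show (∑ q : Idx p ν, ((a + b : ↥(NL p ν k)) : Idx p ν → ℚ) q).num = _
      rw [hab]
      show ((na + nb : ℤ) : ℚ).num = (∑ q : Idx p ν, (a : Idx p ν → ℚ) q).num
        + (∑ q : Idx p ν, (b : Idx p ν → ℚ) q).num
      rw [hna, hnb, Rat.num_intCast, Rat.num_intCast, Rat.num_intCast] }
  let φ : ↥(NL p ν k) →+ ZMod p := (Int.castAddHom (ZMod p)).comp g
  have hgspec : ∀ x : ↥(NL p ν k), ((g x : ℤ):ℚ) = Bf p ν (rho p ν) (x : Idx p ν → ℚ) := by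
    intro x
    rw [Bf_rho]
    exact hspec x
  have hker : φ.ker = (LL p ν k).addSubgroupOf (NL p ν k) := by
    ext x
    rw [AddMonoidHom.mem_ker, AddSubgroup.mem_addSubgroupOf]
    have hφ : φ x = ((g x : ℤ) : ZMod p) := rfl
    constructor
    · intro h0
      rw [hφ, ZMod.intCast_zmod_eq_zero_iff_dvd] at h0
      obtain ⟨e, he⟩ := h0
      refine ⟨x.2, e, ?_⟩
      rw [← hgspec x, he]
      push_cast
      ring
    · rintro ⟨-, e, he⟩
      rw [hφ, ZMod.intCast_zmod_eq_zero_iff_dvd]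
      refine ⟨e, ?_⟩
      have hq : ((g x : ℤ):ℚ) = (((p:ℤ) * e : ℤ):ℚ) := by
        rw [hgspec x, he]
        push_cast
        ring
      exact_mod_cast hq
  have hsurj : Function.Surjective φ := by
    intro c
    obtain ⟨z, rfl⟩ := ZMod.intCast_surjective c
    set d : ↥(NL p ν k) := ⟨Dv p ν q0, Dv_mem p ν k q0⟩ with hd
    have hsum1 : ∑ q : Idx p ν, Dv p ν q0 q = 1 := by
      simp [Dv, Pi.single_apply]
    have hgd : g d = 1 := by
      show (∑ q : Idx p ν, Dv p ν q0 q).num = 1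
      rw [hsum1]
      rfl
    refine ⟨z • d, ?_⟩
    rw [map_zsmul]
    have hφd : φ d = 1 := by
      show ((g d : ℤ) : ZMod p) = 1
      rw [hgd]
      simp
    rw [hφd, zsmul_eq_mul, mul_one]
  have hcard := Nat.card_congr (QuotientAddGroup.quotientKerEquivOfSurjective φ hsurj).toEquiv
  rw [← hker, hcard]
  exact Nat.card_zmod p

end NikAux
/-- The lattice `L_p` is a sublattice of index `p` of `N_p`, contains `ϱ` with `B(ϱ,ϱ) = −2p(p−1)`, and contains no `(−2)`-vector. -/
theorem LLat_index_p_rho_mem_no_minus_two (p ν : ℕ) (k : Fin ν → ℤ) (hk : goodCase p ν k) :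
    LL p ν k ≤ NL p ν k ∧
    rho p ν ∈ LL p ν k ∧
    Bf p ν (rho p ν) (rho p ν) = -2 * (p : ℚ) * ((p : ℚ) - 1) ∧
    Nat.card (↥(NL p ν k) ⧸ ((LL p ν k).addSubgroupOf (NL p ν k))) = p ∧
    ∀ x ∈ LL p ν k, Bf p ν x x ≠ -2 := by
  rcases hk with ⟨rfl, rfl, hkk⟩ | ⟨rfl, rfl, hkk⟩ | ⟨rfl, rfl, hkk⟩ | ⟨rfl, rfl, hkk⟩
  · -- p = 2, ν = 8
    have hkk' : ∀ i : Fin 8, k i = ![1,1,1,1,1,1,1,1] i :=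
      fun i => (hkk i).trans (congrArg _ (Fin.ext rfl))
    have hkk1 : ∀ i : Fin 8, k i = 1 := by
      intro i; rw [hkk' i]; fin_cases i <;> rfl
    have hBrho : Bf 2 8 (rho 2 8) (rho 2 8) = -2 * ((2:ℕ):ℚ) * (((2:ℕ):ℚ) - 1) := by
      rw [NikAux.Bf_rho, Fintype.sum_prod_type]
      norm_num [rho, Fin.sum_univ_succ]
    refine ⟨fun x hx => hx.1, ⟨?_, ⟨-2, by rw [hBrho]; norm_num⟩⟩, hBrho, ?_, ?_⟩
    · apply NikAux.mem_NL_of_rep 2 8 k _ (-1) 0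
      intro q
      obtain ⟨i, j⟩ := q
      fin_cases j <;> norm_num [rho, varpi, hkk1]
    · apply NikAux.index_eq 2 8 k (by norm_num) (0, 0)
      refine ⟨4, ?_⟩
      rw [Fintype.sum_prod_type]
      norm_num [varpi, hkk1, Fin.sum_univ_succ]
    · apply NikAux.no_minus_two 2 8 k (by norm_num) (by norm_num) ?_ (by norm_num)
      intro i
      rw [hkk1 i]
      norm_num
  · -- p = 3, ν = 6
    have hkk' : ∀ i : Fin 6, k i = ![1,1,1,1,1,1] i :=
      fun i => (hkk i).trans (congrArg _ (Fin.ext rfl))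
    have hkk1 : ∀ i : Fin 6, k i = 1 := by
      intro i; rw [hkk' i]; fin_cases i <;> rfl
    have hBrho : Bf 3 6 (rho 3 6) (rho 3 6) = -2 * ((3:ℕ):ℚ) * (((3:ℕ):ℚ) - 1) := by
      rw [NikAux.Bf_rho, Fintype.sum_prod_type]
      norm_num [rho, Fin.sum_univ_succ]
    refine ⟨fun x hx => hx.1, ⟨?_, ⟨-4, by rw [hBrho]; norm_num⟩⟩, hBrho, ?_, ?_⟩
    · apply NikAux.mem_NL_of_rep 3 6 k _ 0 (fun _ => -1)
      intro q
      obtain ⟨i, j⟩ := q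
      fin_cases j <;> norm_num [rho, varpi]
    · apply NikAux.index_eq 3 6 k (by norm_num) (0, 0)
      refine ⟨6, ?_⟩
      rw [Fintype.sum_prod_type]
      norm_num [varpi, hkk1, Fin.sum_univ_succ]
    · apply NikAux.no_minus_two 3 6 k (by norm_num) (by norm_num) ?_ (by norm_num)
      intro i
      rw [hkk1 i]
      norm_num
  · -- p = 5, ν = 4
    have hkk' : ∀ i : Fin 4, k i = ![1,1,2,2] i :=
      fun i => (hkk i).trans (congrArg _ (Fin.ext rfl))
    have hBrho : Bf 5 4 (rho 5 4) (rho 5 4) = -2 * ((5:ℕ):ℚ) * (((5:ℕ):ℚ) - 1) := by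
      rw [NikAux.Bf_rho, Fintype.sum_prod_type]
      norm_num [rho, Fin.sum_univ_succ]
    refine ⟨fun x hx => hx.1, ⟨?_, ⟨-8, by rw [hBrho]; norm_num⟩⟩, hBrho, ?_, ?_⟩
    · apply NikAux.mem_NL_of_rep 5 4 k _ 0 (fun q => ![-2,-3,-3,-2] q.2)
      intro q
      obtain ⟨i, j⟩ := q
      fin_cases j <;> norm_num [rho, varpi]
    · apply NikAux.index_eq 5 4 k (by norm_num) (0, 0)
      refine ⟨12, ?_⟩
      rw [Fintype.sum_prod_type]
      norm_num [varpi, hkk', Fin.sum_univ_succ]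
    · apply NikAux.no_minus_two 5 4 k (by norm_num) (by norm_num) ?_ (by norm_num)
      intro i
      rw [hkk' i]
      fin_cases i <;> norm_num
  · -- p = 7, ν = 3
    have hkk' : ∀ i : Fin 3, k i = ![1,2,3] i :=
      fun i => (hkk i).trans (congrArg _ (Fin.ext rfl))
    have hBrho : Bf 7 3 (rho 7 3) (rho 7 3) = -2 * ((7:ℕ):ℚ) * (((7:ℕ):ℚ) - 1) := by
      rw [NikAux.Bf_rho, Fintype.sum_prod_type]
      norm_num [rho, Fin.sum_univ_succ]
    refine ⟨fun x hx => hx.1, ⟨?_, ⟨-12, by rw [hBrho]; norm_num⟩⟩, hBrho, ?_, ?_⟩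
    · apply NikAux.mem_NL_of_rep 7 3 k _ 0 (fun q => ![-3,-5,-6,-6,-5,-3] q.2)
      intro q
      obtain ⟨i, j⟩ := q
      fin_cases j <;> norm_num [rho, varpi]
    · apply NikAux.index_eq 7 3 k (by norm_num) (0, 0)
      refine ⟨18, ?_⟩
      rw [Fintype.sum_prod_type]
      norm_num [varpi, hkk', Fin.sum_univ_succ]
    · apply NikAux.no_minus_two 7 3 k (by norm_num) (by norm_num) ?_ (by norm_num)
      intro i
      rw [hkk' i]
      fin_cases i <;> norm_num
end

section
/- In the E8 lattice E there exist ℤ-submodules R_1 and R_2 that are mutually orthogonal (B(r_1, r_2) = 0 for all r_1 ∈ R_1, r_2 ∈ R_2), each isometric as a lattice to the A_3 root lattice, and such that the orthogonal complement {x ∈ E : B(x, r) = 0 for all r ∈ R_1 ∪ R_2} of R_1 + R_2 in E is spanned by two vectors u, w with B(u,u) = B(w,w) = 4 and B(u,w) = 0. -/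
open scoped BigOperators

/-- The `E8` lattice: vectors in `ℚ^8` with all coordinates in `ℤ` or all in `ℤ + 1/2`,
and whose coordinate sum is even. -/
def E8set : Set (Fin 8 → ℚ) :=
  {x | ((∀ i, ∃ m : ℤ, x i = m) ∨ (∀ i, ∃ m : ℤ, x i = m + 1 / 2)) ∧
    ∃ m : ℤ, ∑ i, x i = 2 * m}

/-- The standard bilinear form on `ℚ^8`. -/
def B8 (x y : Fin 8 → ℚ) : ℚ := ∑ i, x i * y i

/-- The Gram matrix of the `A3` root lattice. -/
def gramA3 (i j : Fin 3) : ℤ :=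
  if i = j then 2 else if i.1 + 1 = j.1 ∨ j.1 + 1 = i.1 then -1 else 0

/-- The `A3` root lattice form on `ℤ^3`. -/
def A3form (v w : Fin 3 → ℤ) : ℤ := ∑ a, ∑ b, v a * gramA3 a b * w b

/- Auxiliary material -/

lemma cv4 {α : Type*} (a₀ a₁ a₂ a₃ a₄ a₅ a₆ a₇ : α) : ![a₀,a₁,a₂,a₃,a₄,a₅,a₆,a₇] 4 = a₄ := rfl
lemma cv5 {α : Type*} (a₀ a₁ a₂ a₃ a₄ a₅ a₆ a₇ : α) : ![a₀,a₁,a₂,a₃,a₄,a₅,a₆,a₇] 5 = a₅ := rfl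
lemma cv6 {α : Type*} (a₀ a₁ a₂ a₃ a₄ a₅ a₆ a₇ : α) : ![a₀,a₁,a₂,a₃,a₄,a₅,a₆,a₇] 6 = a₆ := rfl
lemma cv7 {α : Type*} (a₀ a₁ a₂ a₃ a₄ a₅ a₆ a₇ : α) : ![a₀,a₁,a₂,a₃,a₄,a₅,a₆,a₇] 7 = a₇ := rfl

/-- First copy of `A3`, spanned by `e₁-e₂, e₂-e₃, e₃-e₄`. -/
def fA : (Fin 3 → ℤ) →ₗ[ℤ] (Fin 8 → ℚ) where
  toFun v := ![(v 0 : ℚ), v 1 - v 0, v 2 - v 1, -v 2, 0, 0, 0, 0]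
  map_add' v w := by
    funext i; fin_cases i <;> simp [cv4, cv5, cv6, cv7] <;> ring
  map_smul' c v := by
    funext i; fin_cases i <;> simp [cv4, cv5, cv6, cv7] <;> ring

/-- Second copy of `A3`, spanned by `e₅-e₆, e₆-e₇, e₇+e₈`. -/
def gA : (Fin 3 → ℤ) →ₗ[ℤ] (Fin 8 → ℚ) where
  toFun v := ![0, 0, 0, 0, (v 0 : ℚ), v 1 - v 0, v 2 - v 1, v 2]
  map_add' v w := by
    funext i; fin_cases i <;> simp [cv4, cv5, cv6, cv7] <;> ring
  map_smul' c v := by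
    funext i; fin_cases i <;> simp [cv4, cv5, cv6, cv7] <;> ring

lemma fA_apply (v : Fin 3 → ℤ) :
    fA v = ![(v 0 : ℚ), v 1 - v 0, v 2 - v 1, -v 2, 0, 0, 0, 0] := rfl

lemma gA_apply (v : Fin 3 → ℤ) :
    gA v = ![0, 0, 0, 0, (v 0 : ℚ), v 1 - v 0, v 2 - v 1, v 2] := rfl

lemma fA_inj : Function.Injective fA := by
  intro v w h
  have h0 := congrFun h 0
  have h1 := congrFun h 1
  have h2 := congrFun h 2
  simp [fA_apply] at h0 h1 h2
  have h0q : (v 0 : ℚ) = w 0 := by exact_mod_cast h0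
  have e1 : (v 1 : ℚ) = w 1 := by linarith
  have e2 : (v 2 : ℚ) = w 2 := by linarith
  funext i
  fin_cases i
  · exact_mod_cast h0
  · exact_mod_cast e1
  · exact_mod_cast e2

lemma gA_inj : Function.Injective gA := by
  intro v w h
  have h0 := congrFun h 4
  have h1 := congrFun h 5
  have h2 := congrFun h 6
  simp [gA_apply, cv4, cv5, cv6] at h0 h1 h2
  have h0q : (v 0 : ℚ) = w 0 := by exact_mod_cast h0
  have e1 : (v 1 : ℚ) = w 1 := by linarith
  have e2 : (v 2 : ℚ) = w 2 := by linarith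
  funext i
  fin_cases i
  · exact_mod_cast h0
  · exact_mod_cast e1
  · exact_mod_cast e2

/-- In the `E8` lattice there exist two mutually orthogonal sublattices, each isometric
to the `A3` root lattice, whose common orthogonal complement in `E8` is spanned by two
orthogonal vectors of self-intersection `4`. -/
theorem exists_orthogonal_A3_pair_in_E8 :
    ∃ R₁ R₂ : Submodule ℤ (Fin 8 → ℚ),
      (R₁ : Set (Fin 8 → ℚ)) ⊆ E8set ∧ (R₂ : Set (Fin 8 → ℚ)) ⊆ E8set ∧
      (∀ r₁ ∈ R₁, ∀ r₂ ∈ R₂, B8 r₁ r₂ = 0) ∧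
      (∃ e : (Fin 3 → ℤ) ≃ₗ[ℤ] R₁,
        ∀ v w : Fin 3 → ℤ, B8 (e v) (e w) = (A3form v w : ℚ)) ∧
      (∃ e : (Fin 3 → ℤ) ≃ₗ[ℤ] R₂,
        ∀ v w : Fin 3 → ℤ, B8 (e v) (e w) = (A3form v w : ℚ)) ∧
      ∃ u w : Fin 8 → ℚ, B8 u u = 4 ∧ B8 w w = 4 ∧ B8 u w = 0 ∧
        {x | x ∈ E8set ∧ ∀ r, (r ∈ R₁ ∨ r ∈ R₂) → B8 x r = 0} =
          (Submodule.span ℤ ({u, w} : Set (Fin 8 → ℚ)) : Set (Fin 8 → ℚ)) := by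
  refine ⟨LinearMap.range fA, LinearMap.range gA, ?_, ?_, ?_, ?_, ?_, ?_⟩
  · rintro r ⟨v, rfl⟩
    refine ⟨Or.inl fun i => ?_, 0, ?_⟩
    · fin_cases i
      exacts [⟨v 0, by simp [fA_apply]⟩, ⟨v 1 - v 0, by simp [fA_apply]⟩,
        ⟨v 2 - v 1, by simp [fA_apply]⟩,
        ⟨-v 2, by simp [fA_apply]⟩, ⟨0, by simp [fA_apply, cv4]⟩,
        ⟨0, by simp [fA_apply, cv5]⟩, ⟨0, by simp [fA_apply, cv6]⟩, ⟨0, by simp [fA_apply, cv7]⟩]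
    · simp [fA_apply, Fin.sum_univ_eight, cv4, cv5, cv6, cv7]
  · rintro r ⟨v, rfl⟩
    refine ⟨Or.inl fun i => ?_, v 2, ?_⟩
    · fin_cases i
      exacts [⟨0, by simp [gA_apply]⟩, ⟨0, by simp [gA_apply]⟩, ⟨0, by simp [gA_apply]⟩,
        ⟨0, by simp [gA_apply]⟩, ⟨v 0, by simp [gA_apply, cv4]⟩,
        ⟨v 1 - v 0, by simp [gA_apply, cv5]⟩,
        ⟨v 2 - v 1, by simp [gA_apply, cv6]⟩, ⟨v 2, by simp [gA_apply, cv7]⟩]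
    · simp [gA_apply, Fin.sum_univ_eight, cv4, cv5, cv6, cv7]
      push_cast; ring
  · rintro r₁ ⟨v, rfl⟩ r₂ ⟨w, rfl⟩
    simp [B8, fA_apply, gA_apply, Fin.sum_univ_eight, cv4, cv5, cv6, cv7]
  · refine ⟨LinearEquiv.ofInjective fA fA_inj, fun v w => ?_⟩
    show B8 (fA v) (fA w) = _
    simp [B8, fA_apply, A3form, gramA3, Fin.sum_univ_eight, Fin.sum_univ_three,
      cv4, cv5, cv6, cv7]
    push_cast; ring
  · refine ⟨LinearEquiv.ofInjective gA gA_inj, fun v w => ?_⟩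
    show B8 (gA v) (gA w) = _
    simp [B8, gA_apply, A3form, gramA3, Fin.sum_univ_eight, Fin.sum_univ_three,
      cv4, cv5, cv6, cv7]
    push_cast; ring
  · refine ⟨![1,1,1,1,0,0,0,0], ![0,0,0,0,1,1,1,-1], ?_, ?_, ?_, ?_⟩
    · simp [B8, Fin.sum_univ_eight, cv4, cv5, cv6, cv7]; norm_num
    · simp [B8, Fin.sum_univ_eight, cv4, cv5, cv6, cv7]; norm_num
    · simp [B8, Fin.sum_univ_eight, cv4, cv5, cv6, cv7]
    · ext x
      simp only [Set.mem_setOf_eq, SetLike.mem_coe, Submodule.mem_span_pair]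
      constructor
      · rintro ⟨⟨hcoord, m, hsum⟩, horth⟩
        have h1 := horth (fA ![1,0,0]) (Or.inl ⟨![1,0,0], rfl⟩)
        have h2 := horth (fA ![0,1,0]) (Or.inl ⟨![0,1,0], rfl⟩)
        have h3 := horth (fA ![0,0,1]) (Or.inl ⟨![0,0,1], rfl⟩)
        have h4 := horth (gA ![1,0,0]) (Or.inr ⟨![1,0,0], rfl⟩)
        have h5 := horth (gA ![0,1,0]) (Or.inr ⟨![0,1,0], rfl⟩)
        have h6 := horth (gA ![0,0,1]) (Or.inr ⟨![0,0,1], rfl⟩)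
        simp [B8, fA_apply, gA_apply, Fin.sum_univ_eight, cv4, cv5, cv6, cv7] at h1 h2 h3 h4 h5 h6
        rw [Fin.sum_univ_eight] at hsum
        rcases hcoord with hint | hhalf
        · obtain ⟨p, hp⟩ := hint 0
          obtain ⟨q, hq⟩ := hint 4
          refine ⟨p, q, ?_⟩
          funext i
          fin_cases i <;>
            simp [cv4, cv5, cv6, cv7] <;> push_cast <;> linarith
        · exfalso
          obtain ⟨p, hp⟩ := hhalf 0
          obtain ⟨q, hq⟩ := hhalf 4
          have key : (4 * p + 2 * q + 3 : ℚ) = 2 * m := by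
            push_cast at hp hq ⊢
            linarith
          have key2 : (4 * p + 2 * q + 3 : ℤ) = 2 * m := by exact_mod_cast key
          omega
      · rintro ⟨a, b, rfl⟩
        refine ⟨⟨Or.inl fun i => ?_, 2 * a + b, ?_⟩, ?_⟩
        · fin_cases i <;> simp [cv4, cv5, cv6, cv7]
          exact ⟨-b, by push_cast; ring⟩
        · simp [Fin.sum_univ_eight, cv4, cv5, cv6, cv7]
          push_cast; ring
        · rintro r (⟨v, rfl⟩ | ⟨v, rfl⟩) <;>
            · simp [B8, fA_apply, gA_apply, Fin.sum_univ_eight, cv4, cv5, cv6, cv7]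
              push_cast; ring
end

section
/- For each p ∈ {2, 3, 5} there exists a ℤ-linear automorphism g of the E8 lattice E preserving the bilinear form B, such that g has order exactly p and {x ∈ E : g(x) = x} = {0}. -/
/-!
A Coxeter element `c` of `W(E₈)` has order 30 and its eigenvalues are the primitive 30th roots
of unity, so for `p ∈ {2, 3, 5}` the power `c ^ (30 / p)` is annihilated by
`1 + X + ⋯ + X ^ (p - 1)`. That identity alone makes `c ^ (30 / p)` of order `p` and, since `p`
is invertible over `ℚ`, leaves no nonzero fixed vector. Orthogonality of `c`, the fact that it
maps a generating set of `E₈` into `E₈`, and the cyclotomic identity are checked by computation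
with the explicit matrix of `c`.
-/

open scoped BigOperators

open Matrix Finset

theorem pow_eq_one_of_geom_sum_eq_zero {R : Type*} [Ring R] {a : R} {n : ℕ}
    (h : ∑ i ∈ range n, a ^ i = 0) : a ^ n = 1 := by
  rw [← sub_eq_zero, ← geom_sum_mul, h, zero_mul]

namespace Matrix

variable {n R : Type*} [Fintype n] [DecidableEq n]

theorem pow_mulVec_eq_self [Semiring R] {M : Matrix n n R} {x : n → R} (hx : M *ᵥ x = x)
    (k : ℕ) : (M ^ k) *ᵥ x = x := by
  induction k with
  | zero => rw [pow_zero, one_mulVec]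
  | succ k ih => rw [pow_succ, ← mulVec_mulVec, hx, ih]

theorem eq_zero_of_mulVec_eq_self_of_geom_sum_eq_zero [Ring R] [IsAddTorsionFree R]
    {M : Matrix n n R} {p : ℕ} (hp : p ≠ 0) (h : ∑ i ∈ range p, M ^ i = 0) {x : n → R}
    (hx : M *ᵥ x = x) : x = 0 := by
  have : p • x = 0 := by
    simpa [sum_mulVec, pow_mulVec_eq_self hx] using congrArg (· *ᵥ x) h
  exact (smul_eq_zero.1 this).resolve_left hp

theorem dotProduct_mulVec_mulVec_of_mem_orthogonalGroup [CommRing R] {M : Matrix n n R}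
    (hM : M ∈ orthogonalGroup n R) (x y : n → R) : M *ᵥ x ⬝ᵥ M *ᵥ y = x ⬝ᵥ y := by
  rw [dotProduct_mulVec, ← vecMul_transpose, vecMul_vecMul, (mem_orthogonalGroup_iff' n R).1 hM,
    vecMul_one]

def GeneralLinearGroup.toLinearEquiv [CommRing R] : GL n R ≃* ((n → R) ≃ₗ[R] (n → R)) :=
  toLin.trans (LinearMap.GeneralLinearGroup.generalLinearEquiv R (n → R))

end Matrix

def E8Lattice : AddSubgroup (Fin 8 → ℚ) where
  carrier := E8set
  zero_mem' := ⟨.inl fun _ => ⟨0, by simp⟩, 0, by simp⟩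
  add_mem' := by
    rintro x y ⟨hx, a, ha⟩ ⟨hy, b, hb⟩
    refine ⟨?_, a + b, by simp [sum_add_distrib, ha, hb, mul_add]⟩
    rcases hx with hx | hx <;> rcases hy with hy | hy <;> choose u hu using hx <;>
      choose v hv using hy
    · exact .inl fun i => ⟨u i + v i, by simp [hu, hv]⟩
    · exact .inr fun i => ⟨u i + v i, by simp [hu, hv]; ring⟩
    · exact .inr fun i => ⟨u i + v i, by simp [hu, hv]; ring⟩
    · exact .inl fun i => ⟨u i + v i + 1, by simp [hu, hv]; ring⟩
  neg_mem' := by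
    rintro x ⟨hx, a, ha⟩
    refine ⟨?_, -a, by simp [ha]⟩
    rcases hx with hx | hx <;> choose u hu using hx
    · exact .inl fun i => ⟨-u i, by simp [hu]⟩
    · exact .inr fun i => ⟨-u i - 1, by simp [hu]; ring⟩

/-- The roots `eᵢ - eᵢ₊₁` and `e₇ + e₈` generate `D₈`; adding the glue vector `½(1, …, 1)`
gives `E₈`. -/
def E8gen : Fin 9 → Fin 8 → ℚ :=
  ![![1, -1, 0, 0, 0, 0, 0, 0], ![0, 1, -1, 0, 0, 0, 0, 0], ![0, 0, 1, -1, 0, 0, 0, 0],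
    ![0, 0, 0, 1, -1, 0, 0, 0], ![0, 0, 0, 0, 1, -1, 0, 0], ![0, 0, 0, 0, 0, 1, -1, 0],
    ![0, 0, 0, 0, 0, 0, 1, -1], ![0, 0, 0, 0, 0, 0, 1, 1], fun _ => 1 / 2]

theorem intCast_mem_closure_E8gen (m : Fin 8 → ℤ) (s : ℤ) (hs : ∑ i, m i = 2 * s) :
    (fun i => (m i : ℚ)) ∈ AddSubgroup.closure (Set.range E8gen) := by
  let c : Fin 9 → ℤ := ![m 0, m 0 + m 1, m 0 + m 1 + m 2, m 0 + m 1 + m 2 + m 3,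
    m 0 + m 1 + m 2 + m 3 + m 4, m 0 + m 1 + m 2 + m 3 + m 4 + m 5, s - m 7, s, 0]
  have hs' : (m 0 : ℚ) + m 1 + m 2 + m 3 + m 4 + m 5 + m 6 + m 7 = 2 * s := by
    exact_mod_cast (Fin.sum_univ_eight m).symm.trans hs
  have hm : (fun i => (m i : ℚ)) = ∑ k, c k • E8gen k := by
    funext i
    fin_cases i <;> simp [c, E8gen, Fin.sum_univ_succ] <;> linarith
  rw [hm]
  exact AddSubgroup.sum_mem _ fun k _ =>
    zsmul_mem (AddSubgroup.subset_closure (Set.mem_range_self k)) _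

theorem E8Lattice_le_closure_E8gen : E8Lattice ≤ AddSubgroup.closure (Set.range E8gen) := by
  rintro x ⟨hx | hx, s, hs⟩ <;> choose m hm using hx
  · rw [show x = fun i => (m i : ℚ) from funext hm]
    refine intCast_mem_closure_E8gen m s ?_
    exact_mod_cast (sum_congr rfl fun i _ => (hm i).symm).trans hs
  · have hx : x = E8gen 8 + fun i => (m i : ℚ) := by
      funext i
      simp [hm, E8gen, add_comm]
    rw [hx]
    refine add_mem (AddSubgroup.subset_closure (Set.mem_range_self 8))
      (intCast_mem_closure_E8gen m (s - 2) ?_)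
    have : ∑ i, (m i : ℚ) + 4 = 2 * s := by
      rw [← hs, sum_congr rfl fun i _ => hm i, sum_add_distrib]; norm_num
    exact_mod_cast (by linarith : ∑ i, (m i : ℚ) = 2 * (s - 2))

def E8Stabilizer : Submonoid (Matrix (Fin 8) (Fin 8) ℚ) where
  carrier := {M | Set.MapsTo (M *ᵥ ·) E8set E8set}
  one_mem' x hx := by simpa using hx
  mul_mem' hA hB x hx := by simpa [mulVec_mulVec] using hA (hB hx)

theorem mem_E8Stabilizer_of_forall_E8gen {M : Matrix (Fin 8) (Fin 8) ℚ}
    (h : ∀ k, M *ᵥ E8gen k ∈ E8set) : M ∈ E8Stabilizer := by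
  have : AddSubgroup.closure (Set.range E8gen) ≤
      E8Lattice.comap (mulVecLin M).toAddMonoidHom := by
    rw [AddSubgroup.closure_le]
    rintro _ ⟨k, rfl⟩
    exact h k
  exact fun x hx => this (E8Lattice_le_closure_E8gen hx)

theorem exists_intCast_eq_iff_den_eq_one (q : ℚ) : (∃ m : ℤ, q = m) ↔ q.den = 1 := by
  refine ⟨?_, fun h => ⟨q.num, ((Rat.den_eq_one_iff q).1 h).symm⟩⟩
  rintro ⟨m, rfl⟩
  exact Rat.den_intCast m

theorem mem_E8set_iff (x : Fin 8 → ℚ) : x ∈ E8set ↔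
    ((∀ i, (x i).den = 1) ∨ ∀ i, (x i - 1 / 2).den = 1) ∧ ((∑ i, x i) / 2).den = 1 := by
  simp only [E8set, Set.mem_ofPred_eq, ← exists_intCast_eq_iff_den_eq_one, sub_eq_iff_eq_add,
    div_eq_iff (two_ne_zero : (2 : ℚ) ≠ 0), mul_comm]

instance : DecidablePred (· ∈ E8set) := fun x => decidable_of_iff _ (mem_E8set_iff x).symm

/-- The Coxeter element `s_{α₁} ⋯ s_{α₈}` for the simple roots `α₁ = ½(1, -1, …, -1, 1)`,
`α₂ = e₁ + e₂` and `αₖ = eₖ₋₁ - eₖ₋₂` (`3 ≤ k ≤ 8`). -/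
def coxeterE8 : Matrix (Fin 8) (Fin 8) ℚ :=
  !![-3/4, 1/4, 1/4, 1/4, 1/4, 1/4, -1/4, -1/4;
     -1/4, -1/4, -1/4, -1/4, -1/4, -1/4, -3/4, 1/4;
     -1/4, 3/4, -1/4, -1/4, -1/4, -1/4, 1/4, 1/4;
     -1/4, -1/4, 3/4, -1/4, -1/4, -1/4, 1/4, 1/4;
     -1/4, -1/4, -1/4, 3/4, -1/4, -1/4, 1/4, 1/4;
     -1/4, -1/4, -1/4, -1/4, 3/4, -1/4, 1/4, 1/4;
     -1/4, -1/4, -1/4, -1/4, -1/4, 3/4, 1/4, 1/4;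
     1/4, 1/4, 1/4, 1/4, 1/4, 1/4, -1/4, 3/4]

theorem coxeterE8_mem_orthogonalGroup : coxeterE8 ∈ orthogonalGroup (Fin 8) ℚ :=
  (mem_orthogonalGroup_iff' _ _).2 (by decide +kernel)

theorem coxeterE8_mem_E8Stabilizer : coxeterE8 ∈ E8Stabilizer :=
  mem_E8Stabilizer_of_forall_E8gen (by decide +kernel)

theorem geom_sum_coxeterE8_pow_eq_zero {p : ℕ} (hp : p ∈ ({2, 3, 5} : Set ℕ)) :
    ∑ i ∈ range p, (coxeterE8 ^ (30 / p)) ^ i = 0 := by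
  rcases hp with rfl | rfl | rfl <;> decide +kernel

theorem exists_E8_isometry_of_geom_sum_eq_zero {p : ℕ} (hp : p.Prime)
    {M : Matrix (Fin 8) (Fin 8) ℚ} (hO : M ∈ orthogonalGroup (Fin 8) ℚ) (hE : M ∈ E8Stabilizer)
    (hgeom : ∑ i ∈ range p, M ^ i = 0) :
    ∃ g : (Fin 8 → ℚ) ≃ₗ[ℚ] (Fin 8 → ℚ),
      (∀ x, x ∈ E8set ↔ g x ∈ E8set) ∧ (∀ x y, B8 (g x) (g y) = B8 x y) ∧
        orderOf g = p ∧ (∀ x ∈ E8set, g x = x → x = 0) := by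
  have hpow : M ^ p = 1 := pow_eq_one_of_geom_sum_eq_zero hgeom
  let U : GL (Fin 8) ℚ := Units.ofPowEqOne M p hpow hp.ne_zero
  refine ⟨GeneralLinearGroup.toLinearEquiv U, fun x => ⟨fun hx => hE hx, fun hx => ?_⟩,
    dotProduct_mulVec_mulVec_of_mem_orthogonalGroup hO, ?_,
    fun x _ hx => eq_zero_of_mulVec_eq_self_of_geom_sum_eq_zero hp.ne_zero hgeom hx⟩
  · -- `M⁻¹ = M ^ (p - 1)` also preserves `E₈`
    have : M ^ (p - 1) *ᵥ (M *ᵥ x) ∈ E8set := pow_mem hE (p - 1) hx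
    rwa [mulVec_mulVec, ← pow_succ, Nat.sub_add_cancel hp.one_le, hpow, one_mulVec] at this
  · have := Fact.mk hp
    have hM1 : M ≠ 1 := fun hM => one_ne_zero <| congrFun
      (eq_zero_of_mulVec_eq_self_of_geom_sum_eq_zero hp.ne_zero hgeom (x := fun _ => 1)
        (by simp [hM])) 0
    rw [MulEquiv.orderOf_eq, ← orderOf_units, Units.val_ofPowEqOne]
    exact orderOf_eq_prime hpow hM1

/-- For each `p ∈ {2, 3, 5}` there is an automorphism of the `E8` lattice, preserving the
bilinear form, of order exactly `p` and with no nonzero fixed vector in the lattice. -/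
theorem exists_fixedPointFree_prime_order_isometry_E8 :
    ∀ p ∈ ({2, 3, 5} : Set ℕ),
      ∃ g : (Fin 8 → ℚ) ≃ₗ[ℚ] (Fin 8 → ℚ),
        (∀ x, x ∈ E8set ↔ g x ∈ E8set) ∧
        (∀ x y, B8 (g x) (g y) = B8 x y) ∧
        orderOf g = p ∧
        (∀ x ∈ E8set, g x = x → x = 0) := by
  intro p hp
  have hprime : p.Prime := by rcases hp with rfl | rfl | rfl <;> norm_num
  exact exists_E8_isometry_of_geom_sum_eq_zero hprime
    (pow_mem coxeterE8_mem_orthogonalGroup _) (pow_mem coxeterE8_mem_E8Stabilizer _)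
    (geom_sum_coxeterE8_pow_eq_zero hp)
end
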